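/- arXiv:1703.01439 — 5 statements merged into one kernel-verified Lean document; each statement's English description precedes it below -/
import Mathlib

section
/- Let φ, ψ : S¹ → ℝ be C¹, let ρ_ᾱ be an optimal rotation with d_{S¹}(φ,ψ) > 0, and suppose the function f_ᾱ(θ) = |φ(θ) − ψ(θ+ᾱ)| attains its global maximum at a unique point θ̄. Then (θ̄, ᾱ) is a critical point of F(θ,α) = |φ(θ) − ψ(θ+α)|, i.e., ∂F/∂θ(θ̄,ᾱ) = 0 and ∂F/∂α(θ̄,ᾱ) = 0. -/
open Filter Topology Set

/-- Pointwise comparison function F(θ,α) = |φ(θ) − ψ(θ+α)|. -/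
noncomputable def nF (φ ψ : ℝ → ℝ) (θ α : ℝ) : ℝ := |φ θ - ψ (θ + α)|

/-- g(α) = max over θ of F(θ,α), as a supremum. -/
noncomputable def nG (φ ψ : ℝ → ℝ) (α : ℝ) : ℝ := ⨆ θ : ℝ, nF φ ψ θ α

/-- Natural pseudo-distance associated with the rotation group S¹. -/
noncomputable def nD (φ ψ : ℝ → ℝ) : ℝ := ⨅ α : ℝ, nG φ ψ α

/-- A Morse function on S¹ (as a 2π-periodic function on ℝ). -/
def IsMorse (φ : ℝ → ℝ) : Prop :=
  ContDiff ℝ (⊤ : ℕ∞) φ ∧ ∀ θ : ℝ, deriv φ θ = 0 → deriv (deriv φ) θ ≠ 0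

/-- Reduce a point to a fundamental interval of a `2π`-periodic function. -/
lemma periodic_reduce {f : ℝ → ℝ} (hp : Function.Periodic f (2 * Real.pi)) (a x : ℝ) :
    ∃ y ∈ Set.Icc (a - Real.pi) (a + Real.pi), f y = f x := by
  have h2 : (0 : ℝ) < 2 * Real.pi := by positivity
  refine ⟨toIocMod h2 (a - Real.pi) x, ?_, ?_⟩
  · have h := toIocMod_mem_Ioc h2 (a - Real.pi) x
    exact ⟨h.1.le, by linarith [h.2]⟩
  · rw [toIocMod]
    exact hp.sub_zsmul_eq _

/-- A continuous `2π`-periodic function is bounded above. -/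
lemma periodic_bound {f : ℝ → ℝ} (hf : Continuous f)
    (hp : Function.Periodic f (2 * Real.pi)) : ∃ C, ∀ x, f x ≤ C := by
  obtain ⟨y₀, hy₀, hmax⟩ := isCompact_Icc.exists_isMaxOn
    (Set.nonempty_Icc.2 (by linarith [Real.pi_pos] : (0:ℝ) - Real.pi ≤ 0 + Real.pi))
    hf.continuousOn
  refine ⟨f y₀, fun x => ?_⟩
  obtain ⟨y, hy, hyx⟩ := periodic_reduce hp 0 x
  exact hyx ▸ hmax hy

set_option maxHeartbeats 1000000 in
theorem optimal_unique_max_is_critical (φ ψ : ℝ → ℝ)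
    (hφ : ContDiff ℝ 1 φ) (hψ : ContDiff ℝ 1 ψ)
    (hpφ : Function.Periodic φ (2 * Real.pi)) (hpψ : Function.Periodic ψ (2 * Real.pi))
    (α' θ' : ℝ) (hopt : nG φ ψ α' = nD φ ψ) (hd : 0 < nD φ ψ)
    (hmax : ∀ θ : ℝ, nF φ ψ θ α' ≤ nF φ ψ θ' α')
    (huniq : ∀ θ : ℝ, nF φ ψ θ α' = nD φ ψ → ∃ k : ℤ, θ = θ' + k * (2 * Real.pi)) :
    deriv (fun θ => nF φ ψ θ α') θ' = 0 ∧ deriv (fun α => nF φ ψ θ' α) α' = 0 := by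
  have hπ := Real.pi_pos
  have hφc := hφ.continuous
  have hψc := hψ.continuous
  have hφd := hφ.differentiable one_ne_zero
  have hψd := hψ.differentiable one_ne_zero
  have hψ'c : Continuous (deriv ψ) := hψ.continuous_deriv le_rfl
  -- basic facts about nF, nG, nD
  have hFper : ∀ α, Function.Periodic (fun θ => nF φ ψ θ α) (2 * Real.pi) := by
    intro α θ
    simp only [nF]
    rw [hpφ θ, show θ + 2 * Real.pi + α = (θ + α) + 2 * Real.pi by ring, hpψ (θ + α)]
  have hFcontθ : ∀ α, Continuous fun θ => nF φ ψ θ α := by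
    intro α; unfold nF; fun_prop
  have hbdd : ∀ α, BddAbove (Set.range fun θ => nF φ ψ θ α) := by
    intro α
    obtain ⟨C, hC⟩ := periodic_bound (hFcontθ α) (hFper α)
    exact ⟨C, by rintro x ⟨θ, rfl⟩; exact hC θ⟩
  have hsup : ∀ α θ, nF φ ψ θ α ≤ nG φ ψ α := fun α θ => le_ciSup (hbdd α) θ
  have hGval : nG φ ψ α' = nF φ ψ θ' α' := le_antisymm (ciSup_le hmax) (hsup α' θ')
  have hFval : nF φ ψ θ' α' = nD φ ψ := hGval ▸ hopt
  have hFnonneg : ∀ θ α, 0 ≤ nF φ ψ θ α := fun θ α => abs_nonneg _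
  have hbelow : BddBelow (Set.range (nG φ ψ)) := by
    refine ⟨0, ?_⟩
    rintro x ⟨α, rfl⟩
    exact le_trans (hFnonneg 0 α) (hsup α 0)
  have hDle : ∀ α, nD φ ψ ≤ nG φ ψ α := fun α => ciInf_le hbelow α
  set d := nD φ ψ with hddef
  -- sign normalization
  set c := φ θ' - ψ (θ' + α') with hc
  have habsc : |c| = d := hFval
  have hcne : c ≠ 0 := by
    intro h; rw [h, abs_zero] at habsc; linarith
  set s : ℝ := if 0 < c then 1 else -1 with hs
  have hsabs : |s| = 1 := by
    rw [hs]; split_ifs <;> simp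
  have hsc : s * c = |c| := by
    rcases lt_trichotomy 0 c with h | h | h
    · simp [hs, h, abs_of_pos h]
    · exact absurd h.symm hcne
    · rw [hs, if_neg (by linarith), abs_of_neg h]; ring
  set G : ℝ → ℝ → ℝ := fun θ α => s * (φ θ - ψ (θ + α)) with hGdef
  have hGle : ∀ θ α, G θ α ≤ nF φ ψ θ α := by
    intro θ α
    calc G θ α ≤ |G θ α| := le_abs_self _
    _ = nF φ ψ θ α := by rw [hGdef]; simp only; rw [abs_mul, hsabs, one_mul]; rfl
  have hGθ'α' : G θ' α' = d := by
    simp only [hGdef]; rw [← hc, hsc, habsc]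
  -- Part 1: θ' is a global max of nF(·, α')
  have part1 : deriv (fun θ => nF φ ψ θ α') θ' = 0 := by
    have h : IsLocalMax (fun θ => nF φ ψ θ α') θ' := Filter.Eventually.of_forall hmax
    exact h.deriv_eq_zero
  refine ⟨part1, ?_⟩
  -- derivative of G in α
  have hGderiv : ∀ θ α, HasDerivAt (fun β => G θ β) (-s * deriv ψ (θ + α)) α := by
    intro θ α
    have h1 : HasDerivAt (fun β : ℝ => θ + β) 1 α := by
      simpa using (hasDerivAt_id α).const_add θ
    have h2 : HasDerivAt (fun β => ψ (θ + β)) (deriv ψ (θ + α) * 1) α :=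
      ((hψd (θ + α)).hasDerivAt).comp α h1
    have h3 := ((hasDerivAt_const α (φ θ)).sub h2).const_mul s
    simpa [hGdef, mul_comm] using h3
    -- s * (0 - ψ'(θ+α)) = -s * ψ'(θ+α)
  set D := -s * deriv ψ (θ' + α') with hD
  -- local positivity and derivative control near (θ', α')
  have hsignpos : (0:ℝ) < s * (φ θ' - ψ (θ' + α')) := by rw [← hc, hsc]; rw [habsc]; exact hd
  -- main claim: D = 0
  have hD0 : D = 0 := by
    by_contra hDne
    have habsD : 0 < |D| := abs_pos.2 hDne
    -- find a closed ball on which sign is positive and derivative close to D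
    have hcont1 : Continuous fun p : ℝ × ℝ => s * (φ p.1 - ψ (p.1 + p.2)) := by fun_prop
    have hcont2 : Continuous fun p : ℝ × ℝ => -s * deriv ψ (p.1 + p.2) := by fun_prop
    have hev : ∀ᶠ p : ℝ × ℝ in 𝓝 (θ', α'),
        0 < s * (φ p.1 - ψ (p.1 + p.2)) ∧ |(-s * deriv ψ (p.1 + p.2)) - D| < |D| / 2 := by
      have e1 : ∀ᶠ p : ℝ × ℝ in 𝓝 (θ', α'), 0 < s * (φ p.1 - ψ (p.1 + p.2)) :=
        hcont1.continuousAt.eventually (eventually_gt_nhds hsignpos)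
      have e2 : ∀ᶠ p : ℝ × ℝ in 𝓝 (θ', α'), |(-s * deriv ψ (p.1 + p.2)) - D| < |D| / 2 := by
        have : ContinuousAt (fun p : ℝ × ℝ => |(-s * deriv ψ (p.1 + p.2)) - D|)
            (θ', α') := (hcont2.sub continuous_const).abs.continuousAt
        have h0 : |(-s * deriv ψ (θ' + α')) - D| < |D| / 2 := by
          rw [← hD, sub_self, abs_zero]; linarith
        exact this.eventually (eventually_lt_nhds h0)
      exact e1.and e2
    obtain ⟨r₀, hr₀, hball₀⟩ := Metric.eventually_nhds_iff_ball.1 hev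
    set r := r₀ / 2 with hr
    have hrpos : 0 < r := by positivity
    have hball : ∀ p : ℝ × ℝ, dist p (θ', α') ≤ r →
        0 < s * (φ p.1 - ψ (p.1 + p.2)) ∧ |(-s * deriv ψ (p.1 + p.2)) - D| < |D| / 2 := by
      intro p hp
      exact hball₀ p (Metric.mem_ball.2 (lt_of_le_of_lt hp (by linarith)))
    -- on the ball, nF = G
    have hFG : ∀ p : ℝ × ℝ, dist p (θ', α') ≤ r → nF φ ψ p.1 p.2 = G p.1 p.2 := by
      intro p hp
      have h := (hball p hp).1
      have : |s * (φ p.1 - ψ (p.1 + p.2))| = s * (φ p.1 - ψ (p.1 + p.2)) := abs_of_pos h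
      rw [abs_mul, hsabs, one_mul] at this
      exact this
    -- set ε
    set ε := min r 1 with hε
    have hεpos : 0 < ε := lt_min hrpos one_pos
    have hεr : ε ≤ r := min_le_left _ _
    have hεπ : ε < Real.pi := lt_of_le_of_lt (min_le_right _ _) (by linarith [Real.pi_gt_three])
    -- far set and its max
    set K := Set.Icc (θ' - Real.pi) (θ' + Real.pi) ∩ {θ : ℝ | ε ≤ |θ - θ'|} with hK
    have hKc : IsCompact K :=
      isCompact_Icc.inter_right (isClosed_le continuous_const (continuous_id.sub continuous_const).abs)
    have hKne : K.Nonempty := by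
      refine ⟨θ' + Real.pi, ⟨by constructor <;> linarith, ?_⟩⟩
      simp only [Set.mem_setOf_eq]
      rw [show θ' + Real.pi - θ' = Real.pi by ring, abs_of_pos hπ]
      linarith
    obtain ⟨θ₀, hθ₀K, hθ₀max⟩ := hKc.exists_isMaxOn hKne (hFcontθ α').continuousOn
    set M := nF φ ψ θ₀ α' with hM
    have hMd : M ≤ d := le_trans (hmax θ₀) hFval.le
    have hMlt : M < d := by
      rcases lt_or_eq_of_le hMd with h | h
      · exact h
      · exfalso
        obtain ⟨k, hk⟩ := huniq θ₀ h
        have h1 : ε ≤ |θ₀ - θ'| := hθ₀K.2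
        have h2 : θ₀ - θ' = k * (2 * Real.pi) := by rw [hk]; ring
        have h3 : |θ₀ - θ'| ≤ Real.pi := by
          rw [abs_le]; constructor <;> [linarith [hθ₀K.1.1]; linarith [hθ₀K.1.2]]
        have hk0 : k = 0 := by
          by_contra hkne
          have : (1:ℝ) ≤ |(k:ℝ)| := by
            have := Int.one_le_abs (by omega : k ≠ 0)
            exact_mod_cast this
          have : 2 * Real.pi ≤ |θ₀ - θ'| := by
            rw [h2, abs_mul, abs_of_pos (by positivity : (0:ℝ) < 2 * Real.pi)]
            nlinarith
          linarith
        rw [hk0] at h2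
        simp at h2
        rw [h2] at h1
        simp at h1
        linarith
    -- Lipschitz bound on ψ
    have hψ'per : Function.Periodic (deriv ψ) (2 * Real.pi) := by
      intro x
      rw [← deriv_comp_add_const ψ (2 * Real.pi) x]
      congr 1
      funext y
      exact hpψ y
    obtain ⟨C₀, hC₀⟩ := periodic_bound (hψ'c.abs) (by intro x; simp [hψ'per x] :
      Function.Periodic (fun x => |deriv ψ x|) (2 * Real.pi))
    set Cnn : NNReal := ⟨max C₀ 0, le_max_right _ _⟩ with hCnn
    have hlip : LipschitzWith Cnn ψ := by
      apply lipschitzWith_of_nnnorm_deriv_le hψd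
      intro x
      rw [← NNReal.coe_le_coe]
      simp only [coe_nnnorm, Real.norm_eq_abs, hCnn]
      exact le_trans (hC₀ x) (le_max_left _ _)
    set C : ℝ := (Cnn : ℝ) with hCdef
    have hCnonneg : 0 ≤ C := Cnn.coe_nonneg
    have hψlip : ∀ a b : ℝ, |ψ a - ψ b| ≤ C * |a - b| := by
      intro a b
      have := hlip.dist_le_mul a b
      rwa [Real.dist_eq, Real.dist_eq] at this
    -- choose t
    set t := min ε ((d - M) / (2 * (C + 1))) with ht
    have htpos : 0 < t := lt_min hεpos (div_pos (by linarith) (by positivity))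
    have htε : t ≤ ε := min_le_left _ _
    have htr : t ≤ r := le_trans htε hεr
    have htfar : C * t ≤ (d - M) / 2 := by
      have h1 : t ≤ (d - M) / (2 * (C + 1)) := min_le_right _ _
      have h2 : t * (2 * (C + 1)) ≤ d - M := (le_div_iff₀ (by positivity)).1 h1
      nlinarith [htpos.le, hCnonneg]
    -- direction
    set σ : ℝ := if 0 < D then -1 else 1 with hσ
    have hσabs : |σ| = 1 := by
      rw [hσ]; split_ifs <;> simp
    have hσD : σ * D = -|D| := by
      rcases lt_trichotomy 0 D with h | h | h
      · rw [hσ, if_pos h, abs_of_pos h]; ring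
      · exact absurd h.symm hDne
      · rw [hσ, if_neg (by linarith), abs_of_neg h]; ring
    set α₀ := α' + σ * t with hα₀
    have hα₀dist : |α₀ - α'| = t := by
      rw [hα₀, show α' + σ * t - α' = σ * t by ring, abs_mul, hσabs, one_mul,
        abs_of_pos htpos]
    -- near bound
    have hnear : ∀ θ ∈ Set.Icc (θ' - ε) (θ' + ε), nF φ ψ θ α₀ ≤ d - t * |D| / 2 := by
      intro θ hθ
      have hθdist : |θ - θ'| ≤ ε := by
        rw [abs_le]; constructor <;> [linarith [hθ.1]; linarith [hθ.2]]
      have hmem : ∀ τ : ℝ, |τ| ≤ t → dist ((θ, α' + σ * τ)) ((θ', α')) ≤ r := by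
        intro τ hτ
        rw [Prod.dist_eq, max_le_iff, Real.dist_eq, Real.dist_eq]
        constructor
        · linarith [hθdist, hεr]
        · rw [show α' + σ * τ - α' = σ * τ by ring, abs_mul, hσabs, one_mul]
          linarith [htr]
      -- MVT on u(τ) = G θ (α' + σ τ) over [0, t]
      have hu : ∀ τ : ℝ, HasDerivAt (fun τ => G θ (α' + σ * τ))
          (σ * (-s * deriv ψ (θ + (α' + σ * τ)))) τ := by
        intro τ
        have h1 : HasDerivAt (fun τ : ℝ => α' + σ * τ) σ τ := by
          simpa using ((hasDerivAt_id τ).const_mul σ).const_add α'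
        have h2 := (hGderiv θ (α' + σ * τ)).comp τ h1
        rw [mul_comm] at h2
        exact h2
      have hcontu : ContinuousOn (fun τ => G θ (α' + σ * τ)) (Set.Icc 0 t) := by
        apply Continuous.continuousOn
        simp only [hGdef]
        fun_prop
      obtain ⟨ξ, hξ, hslope⟩ := exists_hasDerivAt_eq_slope (fun τ => G θ (α' + σ * τ))
        (fun τ => σ * (-s * deriv ψ (θ + (α' + σ * τ)))) htpos hcontu
        (fun x _ => hu x)
      -- bound derivative at ξ
      have hξmem : dist ((θ, α' + σ * ξ)) ((θ', α')) ≤ r :=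
        hmem ξ (by rw [abs_of_pos hξ.1]; exact hξ.2.le)
      have hder := (hball _ hξmem).2
      simp only at hder
      have hσv : σ * (-s * deriv ψ (θ + (α' + σ * ξ))) ≤ -|D| / 2 := by
        set v := -s * deriv ψ (θ + (α' + σ * ξ)) with hv
        have h1 : σ * (v - D) ≤ |v - D| := by
          calc σ * (v - D) ≤ |σ * (v - D)| := le_abs_self _
            _ = |v - D| := by rw [abs_mul, hσabs, one_mul]
        have : σ * v = σ * D + σ * (v - D) := by ring
        rw [this, hσD]
        have : |v - D| < |D| / 2 := by
          simpa [hv] using hder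
        linarith
      -- conclude
      have hGbound : G θ α₀ - G θ α' ≤ -(t * |D| / 2) := by
        have heq : (G θ (α' + σ * t) - G θ (α' + σ * 0)) / (t - 0)
            = σ * (-s * deriv ψ (θ + (α' + σ * ξ))) := by
          rw [← hslope]
        have h2 : (G θ α₀ - G θ α') / t ≤ -|D| / 2 := by
          rw [hα₀]
          have : G θ (α' + σ * 0) = G θ α' := by norm_num
          rw [← this]
          calc (G θ (α' + σ * t) - G θ (α' + σ * 0)) / t
              = (G θ (α' + σ * t) - G θ (α' + σ * 0)) / (t - 0) := by norm_num
            _ = σ * (-s * deriv ψ (θ + (α' + σ * ξ))) := heq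
            _ ≤ -|D| / 2 := hσv
        have := (div_le_iff₀ htpos).1 h2
        calc G θ α₀ - G θ α' ≤ -|D| / 2 * t := this
          _ = -(t * |D| / 2) := by ring
      have hGα' : G θ α' ≤ d := le_trans (hGle θ α') (le_trans (hmax θ) hFval.le)
      have hFeq : nF φ ψ θ α₀ = G θ α₀ := by
        have := hFG (θ, α₀) (by
          rw [Prod.dist_eq, max_le_iff, Real.dist_eq, Real.dist_eq]
          exact ⟨by linarith [hθdist, hεr], by rw [hα₀dist]; exact htr⟩)
        simpa using this
      rw [hFeq]
      linarith
    -- far bound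
    have hfar : ∀ θ, θ ∈ K → nF φ ψ θ α₀ ≤ (M + d) / 2 := by
      intro θ hθ
      have h1 : nF φ ψ θ α₀ ≤ nF φ ψ θ α' + |ψ (θ + α') - ψ (θ + α₀)| := by
        simp only [nF]
        calc |φ θ - ψ (θ + α₀)| = |(φ θ - ψ (θ + α')) + (ψ (θ + α') - ψ (θ + α₀))| := by
              ring_nf
          _ ≤ |φ θ - ψ (θ + α')| + |ψ (θ + α') - ψ (θ + α₀)| := abs_add_le _ _
      have h2 : |ψ (θ + α') - ψ (θ + α₀)| ≤ C * t := by
        calc |ψ (θ + α') - ψ (θ + α₀)| ≤ C * |(θ + α') - (θ + α₀)| := hψlip _ _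
          _ = C * t := by
              rw [show (θ + α') - (θ + α₀) = -(α₀ - α') by ring, abs_neg, hα₀dist]
      have h3 : nF φ ψ θ α' ≤ M := hθ₀max hθ
      calc nF φ ψ θ α₀ ≤ M + C * t := by linarith
        _ ≤ M + (d - M) / 2 := by linarith [htfar]
        _ = (M + d) / 2 := by ring
    -- combine: nG α₀ < d
    set b := max (d - t * |D| / 2) ((M + d) / 2) with hb
    have hblt : b < d := by
      rw [hb, max_lt_iff]
      constructor
      · have : 0 < t * |D| / 2 := by positivity
        linarith
      · linarith
    have hGb : nG φ ψ α₀ ≤ b := by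
      apply ciSup_le
      intro θ
      obtain ⟨τ, hτ, hτeq⟩ := periodic_reduce (hFper α₀) θ' θ
      have hτeq' : nF φ ψ τ α₀ = nF φ ψ θ α₀ := hτeq
      rw [← hτeq']
      rcases le_or_gt (|τ - θ'|) ε with h | h
      · have : τ ∈ Set.Icc (θ' - ε) (θ' + ε) := by
          rw [abs_le] at h
          constructor <;> linarith [h.1, h.2]
        exact le_trans (hnear τ this) (le_max_left _ _)
      · have : τ ∈ K := ⟨hτ, h.le⟩
        exact le_trans (hfar τ this) (le_max_right _ _)
    have := hDle α₀
    linarith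
  -- conclude part 2
  have heq : (fun α => nF φ ψ θ' α) =ᶠ[𝓝 α'] (fun α => G θ' α) := by
    have htend : Tendsto (fun α : ℝ => ((θ', α) : ℝ × ℝ)) (𝓝 α') (𝓝 (θ', α')) :=
      (continuous_const.prodMk continuous_id).tendsto α'
    have hev : ∀ᶠ p : ℝ × ℝ in 𝓝 (θ', α'), 0 < s * (φ p.1 - ψ (p.1 + p.2)) :=
      (by fun_prop : Continuous fun p : ℝ × ℝ => s * (φ p.1 - ψ (p.1 + p.2))).continuousAt.eventually (eventually_gt_nhds hsignpos)
    filter_upwards [htend.eventually hev] with α hα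
    have : |s * (φ θ' - ψ (θ' + α))| = s * (φ θ' - ψ (θ' + α)) := abs_of_pos hα
    rw [abs_mul, hsabs, one_mul] at this
    exact this
  rw [heq.deriv_eq, (hGderiv θ' α').deriv]
  exact hD0
end

section
/- Under the hypotheses of the preceding theorem (unique maximizer θ̄ of f_ᾱ, optimal ᾱ, d > 0, φ and ψ of class C¹), the derivatives satisfy ψ'(θ̄+ᾱ) = 0 and φ'(θ̄) = 0; that is, θ̄ is a critical point of φ and θ̄+ᾱ is a critical point of ψ. -/
set_option maxHeartbeats 1000000


open Filter Topology Set

theorem optimal_unique_max_deriv_vanish (φ ψ : ℝ → ℝ)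
    (hφ : ContDiff ℝ 1 φ) (hψ : ContDiff ℝ 1 ψ)
    (hpφ : Function.Periodic φ (2 * Real.pi)) (hpψ : Function.Periodic ψ (2 * Real.pi))
    (α' θ' : ℝ) (hopt : nG φ ψ α' = nD φ ψ) (hd : 0 < nD φ ψ)
    (hmax : ∀ θ : ℝ, nF φ ψ θ α' ≤ nF φ ψ θ' α')
    (huniq : ∀ θ : ℝ, nF φ ψ θ α' = nD φ ψ → ∃ k : ℤ, θ = θ' + k * (2 * Real.pi)) :
    deriv ψ (θ' + α') = 0 ∧ deriv φ θ' = 0 := by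
  set d := nD φ ψ with hdd
  -- basic facts
  have hψd : Differentiable ℝ ψ := hψ.differentiable one_ne_zero
  have hφd : Differentiable ℝ φ := hφ.differentiable one_ne_zero
  have hψ' : Continuous (deriv ψ) := hψ.continuous_deriv le_rfl
  -- value at θ' is d
  have hbdd : BddAbove (range fun θ => nF φ ψ θ α') := ⟨nF φ ψ θ' α', by rintro _ ⟨θ, rfl⟩; exact hmax θ⟩
  have hval : nF φ ψ θ' α' = d := by
    rw [← hopt]
    exact le_antisymm (le_ciSup hbdd θ') (ciSup_le hmax)
  -- part 1: deriv φ θ' = deriv ψ (θ' + α')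
  have hshift : ∀ x : ℝ, HasDerivAt (fun θ => ψ (θ + α')) (deriv ψ (x + α')) x := by
    intro x
    have := ((hψd (x + α')).hasDerivAt.comp x ((hasDerivAt_id x).add_const α'))
    simp only [mul_one] at this; exact this
  have hu : ∀ x : ℝ, HasDerivAt (fun θ => φ θ - ψ (θ + α')) (deriv φ x - deriv ψ (x + α')) x :=
    fun x => (hφd x).hasDerivAt.sub (hshift x)
  have hune : φ θ' - ψ (θ' + α') ≠ 0 := by
    intro h
    rw [← hval, nF, h, abs_zero] at hd; exact lt_irrefl _ hd
  have hval' : |φ θ' - ψ (θ' + α')| = d := hval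
  have part1 : deriv φ θ' - deriv ψ (θ' + α') = 0 := by
    rcases hune.lt_or_gt with hneg | hpos
    · -- min
      have hmin : IsLocalMin (fun θ => φ θ - ψ (θ + α')) θ' := by
        apply IsMinOn.isLocalMin (s := univ) _ (by simp)
        intro θ _
        have h1 := hmax θ
        rw [hval] at h1
        have h2 : |φ θ' - ψ (θ' + α')| = -(φ θ' - ψ (θ' + α')) := abs_of_neg hneg
        simp only [nF] at h1
        show φ θ' - ψ (θ' + α') ≤ φ θ - ψ (θ + α')
        nlinarith [neg_abs_le (φ θ - ψ (θ + α')), h1, h2, hval']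
      have := hmin.deriv_eq_zero
      rwa [(hu θ').deriv] at this
    · have hmax' : IsLocalMax (fun θ => φ θ - ψ (θ + α')) θ' := by
        apply IsMaxOn.isLocalMax (s := univ) _ (by simp)
        intro θ _
        have h1 := hmax θ
        simp only [nF] at h1
        show φ θ - ψ (θ + α') ≤ φ θ' - ψ (θ' + α')
        nlinarith [le_abs_self (φ θ - ψ (θ + α')), abs_of_pos hpos, h1, hval']
      have := hmax'.deriv_eq_zero
      rwa [(hu θ').deriv] at this
  -- part 2 : deriv ψ (θ' + α') = 0
  have part2 : deriv ψ (θ' + α') = 0 := by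
    by_contra hc
    set c' := deriv ψ (θ' + α') with hc'def
    have hπ : (1:ℝ) < Real.pi := by linarith [Real.pi_gt_three]
    -- signs
    set s : ℝ := if 0 < φ θ' - ψ (θ' + α') then 1 else -1 with hsdef
    set σ : ℝ := if 0 < c' then 1 else -1 with hσdef
    have hs : s = 1 ∨ s = -1 := by unfold s; split <;> simp
    have hσ : σ = 1 ∨ σ = -1 := by unfold σ; split <;> simp
    have hsu : 0 < s * (φ θ' - ψ (θ' + α')) := by
      unfold s; rcases hune.lt_or_gt with h | h
      · rw [if_neg (by linarith)]; linarith
      · rw [if_pos h]; linarith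
    have hσc : σ * c' = |c'| := by
      unfold σ; rcases Ne.lt_or_gt hc with h | h
      · rw [if_neg (by linarith), abs_of_neg h]; ring
      · rw [if_pos h, abs_of_pos h]; ring
    have hcpos : 0 < |c'| := abs_pos.mpr hc
    -- continuity choice (i) : sign of φ θ - ψ (θ + α) near (θ', α')
    have hWc : Continuous (fun p : ℝ × ℝ => s * (φ p.1 - ψ (p.1 + p.2))) := by
      apply continuous_const.mul
      exact (hφd.continuous.comp continuous_fst).sub
        (hψd.continuous.comp (continuous_fst.add continuous_snd))
    obtain ⟨δ₁, hδ₁pos, hδ₁⟩ := Metric.continuousAt_iff.mp (hWc.continuousAt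
      (x := (θ', α'))) (s * (φ θ' - ψ (θ' + α'))) hsu
    have hsign : ∀ θ β : ℝ, |θ - θ'| ≤ δ₁/2 → |β - α'| ≤ δ₁/2 →
        0 < s * (φ θ - ψ (θ + β)) := by
      intro θ β h1 h2
      have hdist : dist (θ, β) (θ', α') < δ₁ := by
        rw [Prod.dist_eq]
        simp only [Real.dist_eq]
        exact max_lt (lt_of_le_of_lt h1 (by linarith)) (lt_of_le_of_lt h2 (by linarith))
      have := hδ₁ hdist
      rw [Real.dist_eq] at this
      have := abs_lt.mp this
      simp only at this ⊢
      linarith [this.1]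
    -- continuity choice (ii) : deriv ψ near θ' + α'
    obtain ⟨δ₂, hδ₂pos, hδ₂⟩ := Metric.continuousAt_iff.mp (hψ'.continuousAt
      (x := θ' + α')) (|c'|/2) (by linarith)
    have hψ'bound : ∀ y : ℝ, |y - (θ' + α')| ≤ δ₂/2 → |c'|/2 ≤ σ * deriv ψ y := by
      intro y hy
      have := hδ₂ (show dist y (θ' + α') < δ₂ by rw [Real.dist_eq]; linarith)
      rw [Real.dist_eq] at this
      have h2 := abs_lt.mp this
      have hσd : σ * deriv ψ y = σ * c' + σ * (deriv ψ y - c') := by ring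
      rcases hσ with h | h <;> rw [h] at hσd ⊢ <;> nlinarith [h2.1, h2.2, hσc, h]
    -- r
    set r : ℝ := min (min (δ₁/2) (δ₂/4)) 1 with hr
    have hrpos : 0 < r := by positivity
    have hr1 : r ≤ 1 := min_le_right _ _
    have hrδ₁ : r ≤ δ₁/2 := le_trans (min_le_left _ _) (min_le_left _ _)
    have hrδ₂ : r ≤ δ₂/4 := le_trans (min_le_left _ _) (min_le_right _ _)
    -- Lipschitz bound for ψ on a big interval
    set I : Set ℝ := Icc (θ' + α' - (Real.pi + 1)) (θ' + α' + (Real.pi + 1)) with hI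
    obtain ⟨y₀, hy₀I, hy₀max⟩ := (isCompact_Icc (a := θ' + α' - (Real.pi + 1))
      (b := θ' + α' + (Real.pi + 1))).exists_isMaxOn
      ⟨θ' + α', by constructor <;> linarith [Real.pi_pos]⟩
      ((continuous_abs.comp hψ').continuousOn)
    set L : ℝ := |deriv ψ y₀| with hL
    have hL0 : 0 ≤ L := abs_nonneg _
    have hlip : ∀ a ∈ I, ∀ b ∈ I, |ψ b - ψ a| ≤ L * |b - a| := by
      intro a ha b hb
      have := Convex.norm_image_sub_le_of_norm_deriv_le (f := ψ) (s := I)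
        (fun x _ => hψd x) (fun x hx => by
          simpa [Real.norm_eq_abs, hL] using hy₀max hx) (convex_Icc _ _) ha hb
      simpa [Real.norm_eq_abs] using this
    -- compact far set and its max
    set K : Set ℝ := Icc (θ' - Real.pi) (θ' + Real.pi) ∩ {θ | r ≤ |θ - θ'|} with hK
    have hKcl : IsClosed {θ : ℝ | r ≤ |θ - θ'|} :=
      isClosed_le continuous_const ((continuous_id.sub continuous_const).abs)
    have hKcp : IsCompact K := isCompact_Icc.inter_right hKcl
    have hKne : K.Nonempty := ⟨θ' + Real.pi, ⟨by constructor <;> linarith [Real.pi_pos],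
      by simp only [mem_setOf_eq, add_sub_cancel_left, abs_of_pos Real.pi_pos]; linarith⟩⟩
    have hFcont : ContinuousOn (fun θ => nF φ ψ θ α') K := by
      apply Continuous.continuousOn
      exact (hφd.continuous.sub (hψd.continuous.comp (continuous_id.add continuous_const))).abs
    obtain ⟨θ₀, hθ₀K, hθ₀max⟩ := hKcp.exists_isMaxOn hKne hFcont
    set m : ℝ := nF φ ψ θ₀ α' with hm
    have hmd : m < d := by
      rcases lt_or_eq_of_le (le_trans (hmax θ₀) (le_of_eq hval)) with h | h
      · exact h
      · exfalso
        obtain ⟨k, hk⟩ := huniq θ₀ h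
        have h1 : |θ₀ - θ'| ≤ Real.pi := by
          rw [abs_le]; constructor <;> [linarith [hθ₀K.1.1]; linarith [hθ₀K.1.2]]
        have h2 : r ≤ |θ₀ - θ'| := hθ₀K.2
        have h3 : θ₀ - θ' = k * (2 * Real.pi) := by linarith [hk]
        rcases eq_or_ne k 0 with h4 | h4
        · rw [h4] at h3; simp at h3
          rw [h3] at h2; simp at h2; linarith
        · have h5 : (1:ℝ) ≤ |(k:ℝ)| := by
            rw [← Int.cast_abs]; exact_mod_cast Int.one_le_abs h4
          rw [h3, abs_mul] at h1
          have : |(2 * Real.pi)| = 2 * Real.pi := abs_of_pos (by linarith)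
          rw [this] at h1
          nlinarith
    -- choose t and α
    set t : ℝ := min r ((d - m)/(2*(L+1))) with ht
    have htpos : 0 < t := lt_min hrpos (div_pos (by linarith) (by positivity))
    have htr : t ≤ r := min_le_left _ _
    have htd : t ≤ (d - m)/(2*(L+1)) := min_le_right _ _
    set α : ℝ := α' + s * σ * t with hα
    have hαd : |α - α'| = t := by
      have : α - α' = s * σ * t := by rw [hα]; ring
      rw [this, abs_mul, abs_mul]
      rcases hs with h | h <;> rcases hσ with h2 | h2 <;> rw [h, h2] <;>
        simp [abs_of_pos htpos]
    have hαr : |α - α'| ≤ r := by rw [hαd]; exact htr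
    -- near bound
    have hnear : ∀ θ : ℝ, |θ - θ'| ≤ r → nF φ ψ θ α ≤ d - |c'|/2 * t := by
      intro θ hθ
      have hθδ : |θ - θ'| ≤ δ₁/2 := le_trans hθ hrδ₁
      have hsgn1 : 0 < s * (φ θ - ψ (θ + α)) := hsign θ α hθδ (le_trans hαr hrδ₁)
      have hsgn2 : 0 < s * (φ θ - ψ (θ + α')) := hsign θ α' hθδ (by simp; linarith)
      have habs1 : nF φ ψ θ α = s * (φ θ - ψ (θ + α)) := by
        rw [nF]; rcases hs with h | h <;> rw [h] at hsgn1 ⊢ <;>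
          [rw [abs_of_pos (by linarith)]; rw [abs_of_neg (by linarith)]] <;> ring
      have habs2 : nF φ ψ θ α' = s * (φ θ - ψ (θ + α')) := by
        rw [nF]; rcases hs with h | h <;> rw [h] at hsgn2 ⊢ <;>
          [rw [abs_of_pos (by linarith)]; rw [abs_of_neg (by linarith)]] <;> ring
      -- monotonicity of σ ψ on J
      set J : Set ℝ := Icc (θ + α' - t) (θ + α' + t) with hJ
      have hJsub : ∀ y ∈ J, |y - (θ' + α')| ≤ δ₂/2 := by
        intro y hy
        have h1 : |y - (θ + α')| ≤ t := by
          rw [abs_le]; constructor <;> [linarith [hy.1]; linarith [hy.2]]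
        have h2 : |θ - θ'| ≤ r := hθ
        calc |y - (θ' + α')| ≤ |y - (θ + α')| + |θ - θ'| := by
              have : y - (θ' + α') = (y - (θ + α')) + (θ - θ') := by ring
              rw [this]; exact abs_add_le _ _
          _ ≤ t + r := add_le_add h1 h2
          _ ≤ δ₂/2 := by linarith
      have hmono : ∀ x ∈ J, ∀ y ∈ J, x ≤ y →
          |c'|/2 * (y - x) ≤ σ * ψ y - σ * ψ x := by
        have := (convex_Icc (θ + α' - t) (θ + α' + t)).mul_sub_le_image_sub_of_le_deriv
          (f := fun y => σ * ψ y)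
          (continuous_const.mul hψd.continuous).continuousOn
          ((differentiable_const _ |>.mul hψd).differentiableOn)
          (C := |c'|/2) ?_
        · exact fun x hx y hy => this x hx y hy
        · intro x hx
          rw [deriv_const_mul _ (hψd x)]
          exact hψ'bound x (hJsub x (interior_subset hx))
      have hx1 : θ + α' ∈ J := by constructor <;> [linarith [htpos]; linarith [htpos]]
      have hx2 : θ + α ∈ J := by
        have h1 := abs_le.mp hαd.le
        have h2 : α - α' ≤ t ∧ -t ≤ α - α' := by
          rw [← hαd]; exact ⟨le_abs_self _, neg_abs_le _⟩
        constructor <;> [linarith [h2.2]; linarith [h2.1]]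
      -- sign cases
      have hkey : s * (ψ (θ + α) - ψ (θ + α')) ≥ |c'|/2 * t := by
        have hss : s * σ = 1 ∨ s * σ = -1 := by
          rcases hs with h | h <;> rcases hσ with h2 | h2 <;> rw [h, h2] <;> simp
        rcases hss with h | h
        · have hα2 : α = α' + t := by rw [hα, h]; ring
          have := hmono (θ + α') hx1 (θ + α) hx2 (by rw [hα2]; linarith)
          have hs2 : s = σ := by
            rcases hs with h1 | h1 <;> rcases hσ with h2 | h2 <;> rw [h1, h2] at h ⊢ <;>
              linarith
          rw [hα2] at this ⊢
          rw [hs2]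
          have harg : θ + (α' + t) - (θ + α') = t := by ring
          rw [harg] at this
          linarith
        · have hα2 : α = α' - t := by rw [hα, show s * σ * t = -t by rw [h]; ring]; ring
          have := hmono (θ + α) hx2 (θ + α') hx1 (by rw [hα2]; linarith)
          have hs2 : s = -σ := by
            rcases hs with h1 | h1 <;> rcases hσ with h2 | h2 <;> rw [h1, h2] at h ⊢ <;>
              linarith
          rw [hα2] at this ⊢
          rw [hs2]
          have harg : θ + α' - (θ + (α' - t)) = t := by ring
          rw [harg] at this
          linarith
      have h2 : nF φ ψ θ α' ≤ d := by rw [← hval]; exact hmax θ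
      have h3 : nF φ ψ θ α = nF φ ψ θ α' - s * (ψ (θ + α) - ψ (θ + α')) := by
        rw [habs1, habs2]; ring
      rw [h3]; linarith
    -- far bound
    have hfar : ∀ θ : ℝ, θ ∈ Icc (θ' - Real.pi) (θ' + Real.pi) → r ≤ |θ - θ'| →
        nF φ ψ θ α ≤ m + L * t := by
      intro θ hθI hθr
      have hKmem : θ ∈ K := ⟨hθI, hθr⟩
      have h1 : nF φ ψ θ α' ≤ m := hθ₀max hKmem
      have htri : nF φ ψ θ α ≤ nF φ ψ θ α' + |ψ (θ + α') - ψ (θ + α)| := by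
        simp only [nF]
        have := abs_sub_le (φ θ - ψ (θ + α')) 0 (ψ (θ + α') - ψ (θ + α))
        calc |φ θ - ψ (θ + α)| = |(φ θ - ψ (θ + α')) + (ψ (θ + α') - ψ (θ + α))| := by
              ring_nf
          _ ≤ |φ θ - ψ (θ + α')| + |ψ (θ + α') - ψ (θ + α)| := abs_add_le _ _
      have ha1 : θ + α' ∈ I := by
        constructor <;> [linarith [hθI.1]; linarith [hθI.2]]
      have ha2 : θ + α ∈ I := by
        have h2 := abs_le.mp hαd.le
        have h2a : α - α' ≤ t ∧ -t ≤ α - α' := by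
          rw [← hαd]; exact ⟨le_abs_self _, neg_abs_le _⟩
        constructor <;>
          [linarith [hθI.1, h2a.2, htr, hr1]; linarith [hθI.2, h2a.1, htr, hr1]]
      have hl := hlip (θ + α) ha2 (θ + α') ha1
      have harg : |θ + α' - (θ + α)| = t := by
        rw [show θ + α' - (θ + α) = -(α - α') by ring, abs_neg, hαd]
      rw [harg] at hl
      linarith
    -- periodic reduction and conclusion
    have hper : Function.Periodic (fun θ => nF φ ψ θ α) (2 * Real.pi) := by
      intro x
      simp only [nF]
      rw [hpφ x, show x + 2 * Real.pi + α = (x + α) + 2 * Real.pi by ring, hpψ (x + α)]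
    set B : ℝ := max (d - |c'|/2 * t) (m + L * t) with hB
    have hBd : B < d := by
      apply max_lt
      · nlinarith
      · have h1 : L * t ≤ L * ((d - m)/(2*(L+1))) := mul_le_mul_of_nonneg_left htd hL0
        have h2 : L * ((d - m)/(2*(L+1))) < d - m := by
          rw [mul_div_assoc', div_lt_iff₀ (by positivity)]
          nlinarith
        linarith
    have hall : ∀ θ : ℝ, nF φ ψ θ α ≤ B := by
      intro θ
      set θ₁ : ℝ := toIcoMod (by positivity : (0:ℝ) < 2 * Real.pi) (θ' - Real.pi) θ with hθ₁
      have hmem : θ₁ ∈ Ico (θ' - Real.pi) (θ' - Real.pi + 2 * Real.pi) :=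
        toIcoMod_mem_Ico _ _ _
      have heq : nF φ ψ θ₁ α = nF φ ψ θ α := by
        have : θ₁ = θ - toIcoDiv (by positivity : (0:ℝ) < 2 * Real.pi) (θ' - Real.pi) θ
            • (2 * Real.pi) := rfl
        rw [this]
        exact hper.sub_zsmul_eq _
      rw [← heq]
      have hIcc : θ₁ ∈ Icc (θ' - Real.pi) (θ' + Real.pi) := by
        constructor
        · exact hmem.1
        · have := hmem.2; linarith
      rcases le_or_gt (|θ₁ - θ'|) r with h | h
      · exact le_trans (hnear θ₁ h) (le_max_left _ _)
      · exact le_trans (hfar θ₁ hIcc h.le) (le_max_right _ _)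
    have hgB : nG φ ψ α ≤ B := ciSup_le hall
    have hdg : d ≤ nG φ ψ α := by
      rw [hdd]
      apply ciInf_le
      exact ⟨0, by rintro _ ⟨β, rfl⟩; exact Real.iSup_nonneg (fun θ => abs_nonneg _)⟩
    linarith
  exact ⟨part2, by linarith [part1]⟩
end

section
/- Let φ, ψ : S¹ → ℝ be Morse functions with d̄ = d_{S¹}(φ,ψ). Then at least one of the following holds: (1) there exist a critical point θ₁ of φ and a critical point θ₂ of ψ with d̄ = |φ(θ₁) − ψ(θ₂)|; or (2) there exist points θ₁, θ₂, θ̃₁, θ̃₂ with d̄ = |φ(θ₁) − ψ(θ₂)| = |φ(θ̃₁) − ψ(θ̃₂)|, φ'(θ₁) = ψ'(θ₂), φ'(θ̃₁) = ψ'(θ̃₂), θ₁ − θ₂ = θ̃₁ − θ̃₂, and moreover φ'(θ₁)·φ'(θ̃₁) < 0 if (φ(θ₁) − ψ(θ₂))·(φ(θ̃₁) − ψ(θ̃₂)) > 0, while φ'(θ₁)·φ'(θ̃₁) > 0 if (φ(θ₁) − ψ(θ₂))·(φ(θ̃₁) − ψ(θ̃₂)) < 0. -/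
open Filter Topology Set

lemma periodic_exists_max (f : ℝ → ℝ) (hc : Continuous f) (hp : Function.Periodic f (2*Real.pi)) :
    ∃ x ∈ Icc (0:ℝ) (2*Real.pi), ∀ y, f y ≤ f x := by
  have h2pi : (0:ℝ) < 2*Real.pi := by positivity
  obtain ⟨x, hx, hmax⟩ := isCompact_Icc.exists_isMaxOn (s := Icc (0:ℝ) (2*Real.pi))
    (nonempty_Icc.2 h2pi.le) hc.continuousOn
  refine ⟨x, hx, fun y => ?_⟩
  obtain ⟨z, hz, hfz⟩ := hp.exists_mem_Ico₀ h2pi y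
  exact hfz ▸ hmax (Ico_subset_Icc_self hz)

lemma ciSup_eq_of_max {f : ℝ → ℝ} {x : ℝ} (h : ∀ y, f y ≤ f x) : (⨆ y, f y) = f x :=
  le_antisymm (ciSup_le h) (le_ciSup ⟨f x, by rintro _ ⟨y, rfl⟩; exact h y⟩ x)

section basic
variable (φ ψ : ℝ → ℝ) (hφc : Continuous φ) (hψc : Continuous ψ)
  (hpφ : Function.Periodic φ (2 * Real.pi)) (hpψ : Function.Periodic ψ (2 * Real.pi))

include hφc hψc in
lemma nF_cont : Continuous (fun p : ℝ × ℝ => nF φ ψ p.1 p.2) := by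
  unfold nF
  exact ((hφc.comp continuous_fst).sub (hψc.comp (continuous_fst.add continuous_snd))).abs

include hpφ hpψ in
lemma nF_periodic_theta (α : ℝ) : Function.Periodic (fun θ => nF φ ψ θ α) (2*Real.pi) := by
  intro θ; unfold nF; simp only []
  rw [hpφ θ, show θ + 2*Real.pi + α = θ + α + 2*Real.pi by ring, hpψ (θ+α)]

include hφc hψc hpφ hpψ in
lemma nG_attain (α : ℝ) : ∃ x ∈ Icc (0:ℝ) (2*Real.pi),
    (∀ y, nF φ ψ y α ≤ nF φ ψ x α) ∧ nF φ ψ x α = nG φ ψ α := by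
  obtain ⟨x, hx, hmax⟩ := periodic_exists_max (fun θ => nF φ ψ θ α)
    ((nF_cont φ ψ hφc hψc).comp (continuous_id.prodMk continuous_const))
    (nF_periodic_theta φ ψ hpφ hpψ α)
  exact ⟨x, hx, hmax, (ciSup_eq_of_max hmax).symm⟩

include hφc hψc hpφ hpψ in
lemma nF_le_nG (θ α : ℝ) : nF φ ψ θ α ≤ nG φ ψ α := by
  obtain ⟨x, _, hmax, heq⟩ := nG_attain φ ψ hφc hψc hpφ hpψ α
  exact heq ▸ hmax θ

include hφc hψc hpφ hpψ in
lemma nG_nonneg (α : ℝ) : 0 ≤ nG φ ψ α :=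
  le_trans (abs_nonneg _) (nF_le_nG φ ψ hφc hψc hpφ hpψ 0 α)

include hpψ in
lemma nG_periodic : Function.Periodic (nG φ ψ) (2*Real.pi) := by
  intro α; unfold nG nF
  congr 1; funext θ
  rw [show θ + (α + 2*Real.pi) = θ + α + 2*Real.pi by ring, hpψ (θ+α)]
end basic

section lip
variable (φ ψ : ℝ → ℝ)

/-- ψ smooth periodic is Lipschitz. -/
lemma psi_lipschitz (hψ : ContDiff ℝ (⊤ : ℕ∞) ψ) (hpψ : Function.Periodic ψ (2 * Real.pi)) :
    ∃ L : NNReal, LipschitzWith L ψ := by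
  obtain ⟨x, _, hx⟩ := periodic_exists_max (fun t => |deriv ψ t|)
    (hψ.continuous_deriv (by simp)).abs (fun t => by
      have : deriv ψ (t + 2*Real.pi) = deriv ψ t := by
        rw [← deriv_comp_add_const ψ (2*Real.pi) t]
        congr 1; funext x; exact hpψ x
      simp only [this])
  refine ⟨⟨|deriv ψ x|, abs_nonneg _⟩, lipschitzWith_of_nnnorm_deriv_le (hψ.differentiable (by simp))
    fun t => ?_⟩
  exact NNReal.coe_le_coe.1 (by show ‖deriv ψ t‖ ≤ |deriv ψ x|; simpa [Real.norm_eq_abs] using hx t)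

lemma nG_lipschitz (hφc : Continuous φ) (hψc : Continuous ψ)
    (hpφ : Function.Periodic φ (2 * Real.pi)) (hpψ : Function.Periodic ψ (2 * Real.pi))
    {L : NNReal} (hL : LipschitzWith L ψ)
    (hle : ∀ θ α, nF φ ψ θ α ≤ nG φ ψ α) : LipschitzWith L (nG φ ψ) := by
  have key : ∀ α β, nG φ ψ α ≤ nG φ ψ β + L * |α - β| := by
    intro α β
    refine ciSup_le fun θ => ?_
    have h1 : nF φ ψ θ α - nF φ ψ θ β ≤ |ψ (θ+β) - ψ (θ+α)| := by
      calc nF φ ψ θ α - nF φ ψ θ β ≤ |(φ θ - ψ (θ+α)) - (φ θ - ψ (θ+β))| :=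
            abs_sub_abs_le_abs_sub _ _
        _ = |ψ (θ+β) - ψ (θ+α)| := by ring_nf
    have h2 : |ψ (θ+β) - ψ (θ+α)| ≤ L * |α - β| := by
      have := hL.dist_le_mul (θ+β) (θ+α)
      rw [Real.dist_eq, Real.dist_eq] at this
      calc |ψ (θ+β) - ψ (θ+α)| ≤ L * |θ+β - (θ+α)| := this
        _ = L * |α - β| := by rw [show θ+β-(θ+α) = -(α-β) by ring, abs_neg]
    have := hle θ β
    linarith
  refine LipschitzWith.of_dist_le_mul fun α β => ?_
  rw [Real.dist_eq, Real.dist_eq, abs_sub_le_iff]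
  have k1 := key α β
  have k2 := key β α
  rw [abs_sub_comm] at k2
  constructor <;> linarith
end lip

lemma u_hasDerivAt (φ ψ : ℝ → ℝ) (hφ : Differentiable ℝ φ) (hψ : Differentiable ℝ ψ)
    (ᾱ y : ℝ) : HasDerivAt (fun z => φ z - ψ (z + ᾱ)) (deriv φ y - deriv ψ (y + ᾱ)) y :=
  (hφ y).hasDerivAt.sub ((hψ (y+ᾱ)).hasDerivAt.comp_add_const y ᾱ)

lemma stationarity (φ ψ : ℝ → ℝ) (hφ : Differentiable ℝ φ) (hψ : Differentiable ℝ ψ)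
    (ᾱ θ : ℝ) (hmax : ∀ y, nF φ ψ y ᾱ ≤ nF φ ψ θ ᾱ) (hne : φ θ - ψ (θ+ᾱ) ≠ 0) :
    deriv φ θ = deriv ψ (θ+ᾱ) := by
  have hd := u_hasDerivAt φ ψ hφ hψ ᾱ θ
  rcases lt_or_gt_of_ne hne with hneg | hpos
  · have hm : IsLocalMin (fun z => φ z - ψ (z + ᾱ)) θ := by
      refine Filter.Eventually.of_forall fun y => ?_
      have h1 : -(nF φ ψ y ᾱ) ≤ φ y - ψ (y+ᾱ) := neg_abs_le _
      have h2 := hmax y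
      have h3 : nF φ ψ θ ᾱ = -(φ θ - ψ (θ+ᾱ)) := abs_of_neg hneg
      simp only []
      linarith
    have := hm.hasDerivAt_eq_zero hd
    linarith [this]
  · have hm : IsLocalMax (fun z => φ z - ψ (z + ᾱ)) θ := by
      refine Filter.Eventually.of_forall fun y => ?_
      have h1 : φ y - ψ (y+ᾱ) ≤ nF φ ψ y ᾱ := le_abs_self _
      have h2 := hmax y
      have h3 : nF φ ψ θ ᾱ = φ θ - ψ (θ+ᾱ) := abs_of_pos hpos
      simp only []
      linarith
    have := hm.hasDerivAt_eq_zero hd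
    linarith [this]

lemma danskin (φ ψ : ℝ → ℝ) (hφc : Continuous φ) (hψd : Differentiable ℝ ψ)
    (hψc : Continuous ψ) (hψ'c : Continuous (deriv ψ))
    (ᾱ : ℝ) (hd : 0 < nG φ ψ ᾱ) (hmin : ∀ α, nG φ ψ ᾱ ≤ nG φ ψ α)
    (attain : ∀ α, ∃ x ∈ Icc (0:ℝ) (2*Real.pi),
      (∀ y, nF φ ψ y α ≤ nF φ ψ x α) ∧ nF φ ψ x α = nG φ ψ α)
    (e : ℝ) (he : e ≠ 0)
    (hK : ∀ θ ∈ Icc (0:ℝ) (2*Real.pi), nF φ ψ θ ᾱ = nG φ ψ ᾱ →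
      0 < e * ((φ θ - ψ (θ+ᾱ)) * deriv ψ (θ+ᾱ))) : False := by
  set d := nG φ ψ ᾱ with hdd
  -- maximizing sequence
  choose x hxmem hxmax hxeq using fun n : ℕ => attain (ᾱ + e/(n+1))
  obtain ⟨θs, hθs, g, hg, hconv⟩ := isCompact_Icc.tendsto_subseq hxmem
  have htend1 : Tendsto (fun n : ℕ => 1/((n:ℝ)+1)) atTop (𝓝 0) :=
    tendsto_one_div_add_atTop_nhds_zero_nat
  have hta : Tendsto (fun n : ℕ => e/((g n : ℝ)+1)) atTop (𝓝 0) := by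
    have := ((htend1.comp hg.tendsto_atTop).const_mul e)
    simpa [mul_one_div, div_eq_mul_inv] using this
  have hFc : Continuous (fun p : ℝ × ℝ => nF φ ψ p.1 (ᾱ + p.2)) := by
    unfold nF
    exact ((hφc.comp continuous_fst).sub
      (hψc.comp (continuous_fst.add (continuous_const.add continuous_snd)))).abs
  have hlim : Tendsto (fun n => nF φ ψ (x (g n)) (ᾱ + e/((g n:ℝ)+1))) atTop (𝓝 (nF φ ψ θs ᾱ)) := by
    have h1 : Tendsto (fun n => ((x (g n)), e/((g n:ℝ)+1))) atTop (𝓝 (θs, 0)) :=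
      hconv.prodMk_nhds hta
    have h2 := (hFc.continuousAt (x := (θs, (0:ℝ)))).tendsto.comp h1
    simpa [Function.comp_def] using h2
  obtain ⟨x0, _, hm0, he0⟩ := attain ᾱ
  have hub : ∀ y, nF φ ψ y ᾱ ≤ d := fun y => by rw [hdd, ← he0]; exact hm0 y
  have hθsK : nF φ ψ θs ᾱ = d := by
    have hge : d ≤ nF φ ψ θs ᾱ := by
      refine ge_of_tendsto hlim (Eventually.of_forall fun n => ?_)
      calc d ≤ nG φ ψ (ᾱ + e/((g n:ℝ)+1)) := hmin _
        _ = nF φ ψ (x (g n)) (ᾱ + e/((g n:ℝ)+1)) := (hxeq (g n)).symm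
    exact le_antisymm (hub θs) hge
  have hKθ := hK θs hθs hθsK
  set u0 := φ θs - ψ (θs+ᾱ) with hu0
  have habsd : |u0| = d := hθsK
  have hu0ne : u0 ≠ 0 := by
    intro h; rw [h, abs_zero] at habsd; exact absurd habsd.symm (ne_of_gt hd)
  set σ : ℝ := if 0 ≤ u0 then 1 else -1 with hσdef
  have hσ : σ = 1 ∨ σ = -1 := by rw [hσdef]; split_ifs <;> simp
  have habs : ∀ v : ℝ, 0 < σ * v → |v| = σ * v := by
    intro v hv; rcases hσ with h|h <;> rw [h] at hv ⊢
    · rw [one_mul] at hv ⊢; exact abs_of_pos hv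
    · have hneg : v < 0 := by linarith
      rw [abs_of_neg hneg]; ring
  have hA : 0 < σ * u0 := by
    rw [hσdef]; split_ifs with h
    · rw [one_mul]; exact lt_of_le_of_ne h (Ne.symm hu0ne)
    · push_neg at h; nlinarith
  have hB : 0 < σ * (e * deriv ψ (θs+ᾱ)) := by
    nlinarith [mul_pos hKθ hA, mul_self_pos.mpr hu0ne]
  -- open neighborhood where the sign conditions hold
  have h1c : Continuous (fun p : ℝ×ℝ => p.1+ᾱ+p.2) :=
    (continuous_fst.add continuous_const).add continuous_snd
  have hUopen : IsOpen {p : ℝ×ℝ | 0 < σ * (φ p.1 - ψ (p.1+ᾱ+p.2)) ∧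
      0 < σ * (e * deriv ψ (p.1+ᾱ+p.2))} := by
    refine IsOpen.inter ?_ ?_
    · exact isOpen_lt continuous_const
        (continuous_const.mul ((hφc.comp continuous_fst).sub (hψc.comp h1c)))
    · exact isOpen_lt continuous_const
        (continuous_const.mul (continuous_const.mul (hψ'c.comp h1c)))
  have hmem : ((θs, 0) : ℝ×ℝ) ∈ {p : ℝ×ℝ | 0 < σ * (φ p.1 - ψ (p.1+ᾱ+p.2)) ∧
      0 < σ * (e * deriv ψ (p.1+ᾱ+p.2))} := by
    constructor <;> simp only [add_zero] <;> [exact hA; exact hB]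
  obtain ⟨r, hr, hball⟩ := Metric.isOpen_iff.1 hUopen (θs,0) hmem
  -- pick a large index n
  have hev : ∀ᶠ n in atTop, ((x (g n)), e/((g n:ℝ)+1)) ∈ Metric.ball ((θs,0) : ℝ×ℝ) r :=
    (hconv.prodMk_nhds hta).eventually (Metric.ball_mem_nhds _ hr)
  obtain ⟨n, hn⟩ := hev.exists
  set θn := x (g n) with hθn
  set t' : ℝ := 1/((g n:ℝ)+1) with ht'def
  have ht' : 0 < t' := by positivity
  have het' : e * t' = e/((g n:ℝ)+1) := by rw [ht'def]; ring
  have hdist : dist θn θs < r ∧ |e * t'| < r := by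
    rw [Metric.mem_ball, Prod.dist_eq, max_lt_iff] at hn
    refine ⟨hn.1, ?_⟩
    rw [het']
    have h2 := hn.2
    rwa [Real.dist_eq, sub_zero] at h2
  have hcond : ∀ s : ℝ, |s| ≤ t' → 0 < σ * (φ θn - ψ (θn+ᾱ+e*s)) ∧
      0 < σ * (e * deriv ψ (θn+ᾱ+e*s)) := by
    intro s hs
    have hmem2 : ((θn, e*s) : ℝ×ℝ) ∈ Metric.ball ((θs,0) : ℝ×ℝ) r := by
      rw [Metric.mem_ball, Prod.dist_eq, max_lt_iff]
      refine ⟨hdist.1, ?_⟩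
      show dist (e*s) (0:ℝ) < r
      rw [Real.dist_eq, sub_zero]
      calc |e * s| = |e| * |s| := abs_mul _ _
        _ ≤ |e| * t' := mul_le_mul_of_nonneg_left hs (abs_nonneg e)
        _ = |e| * |t'| := by rw [abs_of_pos ht']
        _ = |e * t'| := (abs_mul _ _).symm
        _ < r := hdist.2
    exact hball hmem2
  set q : ℝ → ℝ := fun s => σ * (φ θn - ψ (θn + ᾱ + e*s)) with hq
  have hqd : ∀ s, HasDerivAt q (σ * -(deriv ψ (θn+ᾱ+e*s) * e)) s := by
    intro s
    have h1 : HasDerivAt (fun s : ℝ => θn + ᾱ + e*s) e s := by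
      simpa using ((hasDerivAt_id s).const_mul e).const_add (θn+ᾱ)
    have h2 := ((hψd _).hasDerivAt.comp s h1)
    exact (h2.const_sub (φ θn)).const_mul σ
  have hanti : StrictAntiOn q (Icc 0 t') := by
    refine strictAntiOn_of_deriv_neg (convex_Icc 0 t') ?_ ?_
    · exact Continuous.continuousOn (by
        refine continuous_iff_continuousAt.2 fun s => ((hqd s).differentiableAt).continuousAt)
    · intro s hs
      rw [interior_Icc] at hs
      have hc2 := (hcond s (by rw [abs_of_pos hs.1]; exact hs.2.le)).2
      rw [(hqd s).deriv]
      nlinarith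
  have hqlt : q t' < q 0 := hanti ⟨le_refl 0, ht'.le⟩ ⟨ht'.le, le_refl t'⟩ ht'
  have h0 : q 0 = nF φ ψ θn ᾱ := by
    have hc := (hcond 0 (by simpa using ht'.le)).1
    rw [mul_zero, add_zero] at hc
    show σ * (φ θn - ψ (θn + ᾱ + e * 0)) = |φ θn - ψ (θn + ᾱ)|
    rw [mul_zero, add_zero]
    exact (habs _ hc).symm
  have h1 : q t' = nF φ ψ θn (ᾱ + e*t') := by
    have hc := (hcond t' (by rw [abs_of_pos ht']) ).1
    have hshape : θn + (ᾱ + e*t') = θn + ᾱ + e*t' := by ring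
    rw [hq]
    show σ * (φ θn - ψ (θn + ᾱ + e * t')) = |φ θn - ψ (θn + (ᾱ + e * t'))|
    rw [hshape]
    exact (habs _ hc).symm
  have hfin : nF φ ψ θn (ᾱ + e*t') = nG φ ψ (ᾱ + e/((g n:ℝ)+1)) := by
    rw [het']; exact hxeq (g n)
  have hchain : d ≤ nF φ ψ θn (ᾱ + e*t') := by
    rw [hfin]; exact hmin _
  have hlast : nF φ ψ θn ᾱ ≤ d := hub θn
  linarith [hqlt, h0 ▸ hlast, h1 ▸ hchain]


theorem localization_theorem (φ ψ : ℝ → ℝ)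
    (hφ : IsMorse φ) (hψ : IsMorse ψ)
    (hpφ : Function.Periodic φ (2 * Real.pi)) (hpψ : Function.Periodic ψ (2 * Real.pi)) :
    (∃ θ₁ θ₂ : ℝ, deriv φ θ₁ = 0 ∧ deriv ψ θ₂ = 0 ∧ nD φ ψ = |φ θ₁ - ψ θ₂|) ∨
    (∃ θ₁ θ₂ θ₁' θ₂' : ℝ,
      nD φ ψ = |φ θ₁ - ψ θ₂| ∧ nD φ ψ = |φ θ₁' - ψ θ₂'| ∧
      deriv φ θ₁ = deriv ψ θ₂ ∧ deriv φ θ₁' = deriv ψ θ₂' ∧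
      θ₁ - θ₂ = θ₁' - θ₂' ∧
      ((φ θ₁ - ψ θ₂) * (φ θ₁' - ψ θ₂') > 0 → deriv φ θ₁ * deriv φ θ₁' < 0) ∧
      ((φ θ₁ - ψ θ₂) * (φ θ₁' - ψ θ₂') < 0 → deriv φ θ₁ * deriv φ θ₁' > 0)) := by
  have hφc : Continuous φ := hφ.1.continuous
  have hψc : Continuous ψ := hψ.1.continuous
  have hφd : Differentiable ℝ φ := hφ.1.differentiable (by simp)
  have hψd : Differentiable ℝ ψ := hψ.1.differentiable (by simp)
  have hψ'c : Continuous (deriv ψ) := hψ.1.continuous_deriv (by simp)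
  have attain := nG_attain φ ψ hφc hψc hpφ hpψ
  have hle := nF_le_nG φ ψ hφc hψc hpφ hpψ
  obtain ⟨L, hL⟩ := psi_lipschitz ψ hψ.1 hpψ
  have hGlip := nG_lipschitz φ ψ hφc hψc hpφ hpψ hL hle
  have hGper := nG_periodic φ ψ hpψ
  -- minimizer of nG
  obtain ⟨ᾱ, _, hminneg⟩ := periodic_exists_max (fun α => -(nG φ ψ α))
    hGlip.continuous.neg (fun α => by simp only []; rw [hGper α])
  have hmin : ∀ α, nG φ ψ ᾱ ≤ nG φ ψ α := fun α => by linarith [hminneg α]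
  have hnD : nD φ ψ = nG φ ψ ᾱ := by
    refine le_antisymm (ciInf_le ⟨0, ?_⟩ ᾱ) (le_ciInf hmin)
    rintro _ ⟨α, rfl⟩; exact nG_nonneg φ ψ hφc hψc hpφ hpψ α
  set d := nG φ ψ ᾱ with hdd
  rcases eq_or_lt_of_le (nG_nonneg φ ψ hφc hψc hpφ hpψ ᾱ) with h0 | hdpos
  · -- d = 0 : φ = ψ(·+ᾱ)
    have hall : ∀ θ, φ θ = ψ (θ + ᾱ) := by
      intro θ
      have h1 : nF φ ψ θ ᾱ ≤ 0 := h0 ▸ hle θ ᾱ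
      have h2 : |φ θ - ψ (θ + ᾱ)| = 0 := le_antisymm h1 (abs_nonneg _)
      have := abs_eq_zero.1 h2
      linarith
    obtain ⟨θc, _, hmaxφ⟩ := periodic_exists_max φ hφc hpφ
    have hφ' : deriv φ θc = 0 :=
      (IsLocalMax.deriv_eq_zero (Filter.Eventually.of_forall hmaxφ))
    have hψeq : ψ = fun x => φ (x - ᾱ) := by
      funext x
      rw [hall (x - ᾱ)]; ring_nf
    have hψ' : deriv ψ (θc + ᾱ) = 0 := by
      rw [hψeq, deriv_comp_sub_const, add_sub_cancel_right, hφ']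
    refine Or.inl ⟨θc, θc + ᾱ, hφ', hψ', ?_⟩
    rw [hall θc, sub_self, abs_zero, hnD, hdd, ← h0]
  · -- d > 0
    obtain ⟨x0, _, hm0, he0⟩ := attain ᾱ
    have hub : ∀ y, nF φ ψ y ᾱ ≤ d := fun y => by rw [hdd, ← he0]; exact hm0 y
    have hstat : ∀ θ, nF φ ψ θ ᾱ = d → deriv φ θ = deriv ψ (θ + ᾱ) := by
      intro θ hθ
      refine stationarity φ ψ hφd hψd ᾱ θ (fun y => hθ ▸ hub y) ?_
      intro hzero
      have : nF φ ψ θ ᾱ = 0 := by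
        show |φ θ - ψ (θ + ᾱ)| = 0
        rw [hzero, abs_zero]
      rw [this] at hθ; exact absurd hθ.symm (ne_of_gt hdpos)
    by_cases hc1 : ∃ θ ∈ Icc (0:ℝ) (2*Real.pi), nF φ ψ θ ᾱ = d ∧ deriv ψ (θ + ᾱ) = 0
    · obtain ⟨θ, _, hθd, hψ0⟩ := hc1
      refine Or.inl ⟨θ, θ + ᾱ, ?_, hψ0, ?_⟩
      · rw [hstat θ hθd, hψ0]
      · rw [hnD]; exact hθd.symm
    · push_neg at hc1
      -- both signs must occur
      have hPN : (∃ θ ∈ Icc (0:ℝ) (2*Real.pi), nF φ ψ θ ᾱ = d ∧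
            0 < (φ θ - ψ (θ + ᾱ)) * deriv ψ (θ + ᾱ)) ∧
          (∃ θ ∈ Icc (0:ℝ) (2*Real.pi), nF φ ψ θ ᾱ = d ∧
            (φ θ - ψ (θ + ᾱ)) * deriv ψ (θ + ᾱ) < 0) := by
        have hne : ∀ θ ∈ Icc (0:ℝ) (2*Real.pi), nF φ ψ θ ᾱ = d →
            (φ θ - ψ (θ + ᾱ)) * deriv ψ (θ + ᾱ) ≠ 0 := by
          intro θ hθm hθd hprod
          rcases mul_eq_zero.1 hprod with hu | hp
          · have : nF φ ψ θ ᾱ = 0 := by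
              show |φ θ - ψ (θ + ᾱ)| = 0
              rw [hu, abs_zero]
            rw [this] at hθd; exact absurd hθd.symm (ne_of_gt hdpos)
          · exact hc1 θ hθm hθd hp
        constructor
        · by_contra hP
          push_neg at hP
          refine danskin φ ψ hφc hψd hψc hψ'c ᾱ hdpos hmin attain (-1) (by norm_num)
            (fun θ hθm hθd => ?_)
          have h1 := hP θ hθm hθd
          have h2 := hne θ hθm hθd
          have h3 : (φ θ - ψ (θ + ᾱ)) * deriv ψ (θ + ᾱ) < 0 := lt_of_le_of_ne h1 h2
          nlinarith
        · by_contra hN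
          push_neg at hN
          refine danskin φ ψ hφc hψd hψc hψ'c ᾱ hdpos hmin attain 1 one_ne_zero
            (fun θ hθm hθd => ?_)
          have h1 := hN θ hθm hθd
          have h2 := hne θ hθm hθd
          have h3 : 0 < (φ θ - ψ (θ + ᾱ)) * deriv ψ (θ + ᾱ) :=
            lt_of_le_of_ne h1 (Ne.symm h2)
          nlinarith
      obtain ⟨⟨θ, _, hθd, hθpos⟩, ⟨θ', _, hθ'd, hθ'neg⟩⟩ := hPN
      have hs1 := hstat θ hθd
      have hs2 := hstat θ' hθ'd
      refine Or.inr ⟨θ, θ + ᾱ, θ', θ' + ᾱ, ?_, ?_, hs1, hs2, by ring, ?_, ?_⟩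
      · rw [hnD]; exact hθd.symm
      · rw [hnD]; exact hθ'd.symm
      · intro hab
        rw [hs1, hs2]
        nlinarith [mul_neg_of_pos_of_neg hθpos hθ'neg]
      · intro hab
        rw [hs1, hs2]
        nlinarith [mul_neg_of_pos_of_neg hθpos hθ'neg]
end

section
/- For Morse functions φ, ψ : S¹ → ℝ, the set of optimal rotations {α ∈ S¹ : max_{θ∈S¹} |φ(θ) − ψ(θ+α)| = d_{S¹}(φ,ψ)} is finite. -/
open Filter Topology Set

namespace OptRot

variable {φ ψ : ℝ → ℝ}

lemma morse_smooth (h : IsMorse φ) : ContDiff ℝ (⊤ : ℕ∞) φ := h.1.of_le (by simp)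

lemma morse_diff (h : IsMorse φ) : Differentiable ℝ φ :=
  (contDiff_infty_iff_deriv.mp (morse_smooth h)).1

lemma morse_cont (h : IsMorse φ) : Continuous φ := h.1.continuous

lemma morse_diffDeriv (h : IsMorse φ) : Differentiable ℝ (deriv φ) :=
  (contDiff_infty_iff_deriv.mp (contDiff_infty_iff_deriv.mp (morse_smooth h)).2).1

lemma morse_contDeriv (h : IsMorse φ) : Continuous (deriv φ) :=
  (morse_diffDeriv h).continuous

lemma contF (hφ : Continuous φ) (hψ : Continuous ψ) (α : ℝ) :
    Continuous fun θ => nF φ ψ θ α := by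
  unfold nF; fun_prop

lemma periodic_nF (hpφ : Function.Periodic φ (2 * Real.pi))
    (hpψ : Function.Periodic ψ (2 * Real.pi)) (α : ℝ) :
    Function.Periodic (fun θ => nF φ ψ θ α) (2 * Real.pi) := by
  intro θ
  simp only [nF]
  rw [hpφ θ, show θ + 2 * Real.pi + α = θ + α + 2 * Real.pi by ring, hpψ (θ + α)]

lemma range_nF_eq (hpφ : Function.Periodic φ (2 * Real.pi))
    (hpψ : Function.Periodic ψ (2 * Real.pi)) (α : ℝ) :
    range (fun θ => nF φ ψ θ α) = (fun θ => nF φ ψ θ α) '' Icc 0 (2 * Real.pi) := by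
  rw [← (periodic_nF hpφ hpψ α).image_uIcc Real.two_pi_pos.ne' 0]
  rw [uIcc_of_le (by positivity), zero_add]

lemma bddAbove_range_nF (hφ : Continuous φ) (hψ : Continuous ψ)
    (hpφ : Function.Periodic φ (2 * Real.pi)) (hpψ : Function.Periodic ψ (2 * Real.pi))
    (α : ℝ) : BddAbove (range fun θ => nF φ ψ θ α) := by
  rw [range_nF_eq hpφ hpψ α]
  exact (isCompact_Icc.image_of_continuousOn ((contF hφ hψ α).continuousOn)).bddAbove

lemma nF_le_nG (hφ : Continuous φ) (hψ : Continuous ψ)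
    (hpφ : Function.Periodic φ (2 * Real.pi)) (hpψ : Function.Periodic ψ (2 * Real.pi))
    (θ α : ℝ) : nF φ ψ θ α ≤ nG φ ψ α :=
  le_ciSup (bddAbove_range_nF hφ hψ hpφ hpψ α) θ

lemma nG_nonneg (hφ : Continuous φ) (hψ : Continuous ψ)
    (hpφ : Function.Periodic φ (2 * Real.pi)) (hpψ : Function.Periodic ψ (2 * Real.pi))
    (α : ℝ) : 0 ≤ nG φ ψ α :=
  le_trans (abs_nonneg _) (nF_le_nG hφ hψ hpφ hpψ 0 α)

lemma nD_le_nG (hφ : Continuous φ) (hψ : Continuous ψ)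
    (hpφ : Function.Periodic φ (2 * Real.pi)) (hpψ : Function.Periodic ψ (2 * Real.pi))
    (α : ℝ) : nD φ ψ ≤ nG φ ψ α :=
  ciInf_le ⟨0, by rintro x ⟨β, rfl⟩; exact nG_nonneg hφ hψ hpφ hpψ β⟩ α

lemma nD_nonneg (hφ : Continuous φ) (hψ : Continuous ψ)
    (hpφ : Function.Periodic φ (2 * Real.pi)) (hpψ : Function.Periodic ψ (2 * Real.pi)) :
    0 ≤ nD φ ψ :=
  le_ciInf (fun α => nG_nonneg hφ hψ hpφ hpψ α)

lemma exists_argmax (hφ : Continuous φ) (hψ : Continuous ψ)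
    (hpφ : Function.Periodic φ (2 * Real.pi)) (hpψ : Function.Periodic ψ (2 * Real.pi))
    (α : ℝ) : ∃ θm ∈ Icc (0:ℝ) (2 * Real.pi), nG φ ψ α = nF φ ψ θm α := by
  obtain ⟨θm, hmem, hmax⟩ := isCompact_Icc.exists_isMaxOn (f := fun θ => nF φ ψ θ α)
    (nonempty_Icc.mpr Real.two_pi_pos.le) (contF hφ hψ α).continuousOn
  refine ⟨θm, hmem, le_antisymm (csSup_le (range_nonempty _) ?_)
    (nF_le_nG hφ hψ hpφ hpψ θm α)⟩
  rintro x ⟨θ, rfl⟩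
  have : nF φ ψ θ α ∈ (fun θ => nF φ ψ θ α) '' Icc 0 (2 * Real.pi) := by
    rw [← range_nF_eq hpφ hpψ α]; exact mem_range_self θ
  obtain ⟨θ', hθ', heq⟩ := this
  exact le_of_eq_of_le heq.symm (hmax hθ')

section SignHelpers

open Filter Topology Set

lemma sign_right_of_deriv_neg {f : ℝ → ℝ} {c x : ℝ} (hf : HasDerivAt f c x) (h0 : f x = 0)
    (hc : c < 0) : ∀ᶠ y in 𝓝[>] x, f y < 0 := by
  have hs : Tendsto (slope f x) (𝓝[>] x) (𝓝 c) :=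
    (hasDerivAt_iff_tendsto_slope.mp hf).mono_left
      (nhdsWithin_mono x fun y hy => ne_of_gt hy)
  filter_upwards [hs.eventually_lt_const hc, self_mem_nhdsWithin] with y hsl hy
  rw [slope_def_field, h0, sub_zero] at hsl
  rcases div_neg_iff.mp hsl with ⟨_, hb⟩ | ⟨ha, _⟩
  · exfalso; simp only [mem_Ioi] at hy; linarith
  · exact ha

lemma sign_left_of_deriv_neg {f : ℝ → ℝ} {c x : ℝ} (hf : HasDerivAt f c x) (h0 : f x = 0)
    (hc : c < 0) : ∀ᶠ y in 𝓝[<] x, 0 < f y := by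
  have hs : Tendsto (slope f x) (𝓝[<] x) (𝓝 c) :=
    (hasDerivAt_iff_tendsto_slope.mp hf).mono_left
      (nhdsWithin_mono x fun y hy => ne_of_lt hy)
  filter_upwards [hs.eventually_lt_const hc, self_mem_nhdsWithin] with y hsl hy
  rw [slope_def_field, h0, sub_zero] at hsl
  rcases div_neg_iff.mp hsl with ⟨ha, _⟩ | ⟨_, hb⟩
  · exact ha
  · exfalso; simp only [mem_Iio] at hy; linarith

lemma sign_right_of_deriv_pos {f : ℝ → ℝ} {c x : ℝ} (hf : HasDerivAt f c x) (h0 : f x = 0)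
    (hc : 0 < c) : ∀ᶠ y in 𝓝[>] x, 0 < f y := by
  filter_upwards [sign_right_of_deriv_neg hf.neg (by simp [h0]) (by linarith)] with y hy
  simpa using hy

lemma sign_left_of_deriv_pos {f : ℝ → ℝ} {c x : ℝ} (hf : HasDerivAt f c x) (h0 : f x = 0)
    (hc : 0 < c) : ∀ᶠ y in 𝓝[<] x, f y < 0 := by
  filter_upwards [sign_left_of_deriv_neg hf.neg (by simp [h0]) (by linarith)] with y hy
  simpa using hy

end SignHelpers
section Core

open Filter Topology Set

variable {φ ψ : ℝ → ℝ}

set_option maxHeartbeats 2000000 in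
lemma no_right_accumulation (hφ : IsMorse φ) (hψ : IsMorse ψ)
    (hpφ : Function.Periodic φ (2 * Real.pi)) (hpψ : Function.Periodic ψ (2 * Real.pi))
    (α₀ : ℝ) (s : ℕ → ℝ) (hspos : ∀ n, 0 < s n) (hslim : Tendsto s atTop (𝓝 0))
    (hopt : ∀ n, nG φ ψ (α₀ + s n) = nD φ ψ) : False := by
  have cφ : Continuous φ := morse_cont hφ
  have cψ : Continuous ψ := morse_cont hψ
  set d := nD φ ψ with hd
  -- F ≤ d at the optimal parameters
  have hFn : ∀ θ n, nF φ ψ θ (α₀ + s n) ≤ d := fun θ n => by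
    rw [← hopt n]; exact nF_le_nG cφ cψ hpφ hpψ θ _
  -- F(θ, α₀) ≤ d by passing to the limit
  have hF0 : ∀ θ, nF φ ψ θ α₀ ≤ d := by
    intro θ
    have h1 : Tendsto (fun n => θ + (α₀ + s n)) atTop (𝓝 (θ + α₀)) := by
      have := (tendsto_const_nhds (x := θ + α₀)).add hslim
      simp only [add_zero] at this
      convert this using 2 with n
      ring
    have h2 : Tendsto (fun n => nF φ ψ θ (α₀ + s n)) atTop (𝓝 (nF φ ψ θ α₀)) := by
      unfold nF
      exact (continuous_abs.tendsto _).comp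
        (tendsto_const_nhds.sub ((cψ.tendsto _).comp h1))
    exact le_of_tendsto h2 (Eventually.of_forall fun n => hFn θ n)
  have hd0 : (0:ℝ) ≤ d := nD_nonneg cφ cψ hpφ hpψ
  rcases hd0.eq_or_lt with hdz | hdpos
  · -- d = 0 : ψ admits arbitrarily small periods, contradiction with Morse
    have hper : ∀ n x, ψ (x + s n) = ψ x := by
      intro n x
      have e0 : nF φ ψ (x - α₀) α₀ = 0 :=
        le_antisymm (hdz ▸ hF0 (x - α₀)) (abs_nonneg _)
      have en : nF φ ψ (x - α₀) (α₀ + s n) = 0 :=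
        le_antisymm (hdz ▸ hFn (x - α₀) n) (abs_nonneg _)
      rw [nF, abs_eq_zero, sub_eq_zero] at e0 en
      rw [sub_add_cancel] at e0
      rw [show x - α₀ + (α₀ + s n) = x + s n by ring] at en
      rw [← en, ← e0]
    have hrolle : ∀ n, ∃ z ∈ Ioo 0 (s n), deriv ψ z = 0 := fun n =>
      exists_deriv_eq_zero (hspos n) cψ.continuousOn (by rw [← zero_add (s n)]; exact (hper n 0).symm)
    choose z hz hz0 using hrolle
    have hzlim : Tendsto z atTop (𝓝 0) :=
      tendsto_of_tendsto_of_tendsto_of_le_of_le tendsto_const_nhds hslim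
        (fun n => (hz n).1.le) (fun n => (hz n).2.le)
    have hψ'0 : deriv ψ 0 = 0 := by
      have h3 : Tendsto (fun n => deriv ψ (z n)) atTop (𝓝 (deriv ψ 0)) :=
        ((morse_contDeriv hψ).tendsto 0).comp hzlim
      have h4 : Tendsto (fun n => deriv ψ (z n)) atTop (𝓝 0) := by
        simp only [hz0]; exact tendsto_const_nhds
      exact tendsto_nhds_unique h3 h4
    have hb2 := hψ.2 0 hψ'0
    have hDA : HasDerivAt (deriv ψ) (deriv (deriv ψ) 0) 0 := (morse_diffDeriv hψ 0).hasDerivAt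
    have hzin : Tendsto z atTop (𝓝[>] 0) :=
      tendsto_nhdsWithin_of_tendsto_nhds_of_eventually_within _ hzlim
        (Eventually.of_forall fun n => (hz n).1)
    rcases hb2.lt_or_gt with hneg | hpos
    · obtain ⟨n, hn⟩ := (hzin.eventually (sign_right_of_deriv_neg hDA hψ'0 hneg)).exists
      rw [hz0 n] at hn; exact lt_irrefl 0 hn
    · obtain ⟨n, hn⟩ := (hzin.eventually (sign_right_of_deriv_pos hDA hψ'0 hpos)).exists
      rw [hz0 n] at hn; exact lt_irrefl 0 hn
  · -- d > 0
    simp only [nF] at hFn hF0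
    have hargmax : ∀ n, ∃ θm ∈ Icc (0:ℝ) (2*Real.pi), nF φ ψ θm (α₀ + s n) = d := by
      intro n
      obtain ⟨θm, hm, he⟩ := exists_argmax cφ cψ hpφ hpψ (α₀ + s n)
      exact ⟨θm, hm, by rw [← he, hopt n]⟩
    choose t ht htd using hargmax
    simp only [nF] at htd
    obtain ⟨θb, hθbmem, κ, hκ, hκlim⟩ := isCompact_Icc.tendsto_subseq ht
    set σ : ℕ → ℝ := fun n => s (κ n) with hσdef
    set u : ℕ → ℝ := fun n => t (κ n) with hudef
    have hσpos : ∀ n, 0 < σ n := fun n => hspos (κ n)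
    have hσlim : Tendsto σ atTop (𝓝 0) := hslim.comp hκ.tendsto_atTop
    have hulim : Tendsto u atTop (𝓝 θb) := hκlim
    have hud : ∀ n, |φ (u n) - ψ (u n + (α₀ + σ n))| = d := fun n => htd (κ n)
    set β := θb + α₀ with hβdef
    set L := φ θb - ψ β with hLdef
    have hxlim : Tendsto (fun n => u n + (α₀ + σ n)) atTop (𝓝 β) := by
      have := hulim.add ((tendsto_const_nhds (x := α₀)).add hσlim)
      simpa [← add_assoc] using this
    have hvlim : Tendsto (fun n => φ (u n) - ψ (u n + (α₀ + σ n))) atTop (𝓝 L) :=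
      ((cφ.tendsto _).comp hulim).sub ((cψ.tendsto _).comp hxlim)
    have habsL : |L| = d := by
      refine tendsto_nhds_unique ((continuous_abs.tendsto _).comp hvlim) ?_
      simp only [Function.comp_def, hud]
      exact tendsto_const_nhds
    set ε : ℝ := if 0 < L then 1 else -1 with hεdef
    have hε1 : ε = 1 ∨ ε = -1 := by
      rw [hεdef]; split <;> simp
    have hεL : L = ε * d := by
      rw [hεdef]; split
      · rw [one_mul, ← habsL, abs_of_pos ‹_›]
      · push_neg at *; rw [← habsL, abs_of_nonpos ‹L ≤ 0›]; ring
    have hεne : ε ≠ 0 := by rcases hε1 with h|h <;> rw [h] <;> norm_num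
    have hεabs : ∀ x : ℝ, ε * x ≤ |x| := by
      intro x; rcases hε1 with h|h <;> rw [h]
      · simpa using le_abs_self x
      · rw [neg_one_mul]; exact neg_le_abs x
    have hE0 : ∀ θ, ε * (φ θ - ψ (θ + α₀)) ≤ d :=
      fun θ => le_trans (hεabs _) (hF0 θ)
    have hEn : ∀ θ n, ε * (φ θ - ψ (θ + (α₀ + σ n))) ≤ d :=
      fun θ n => le_trans (hεabs _) (hFn θ (κ n))
    have hEθb : ε * (φ θb - ψ β) = d := by
      rw [← hLdef, hεL, ← mul_assoc]
      rcases hε1 with h|h <;> rw [h] <;> norm_num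
    have heq : ∀ᶠ n in atTop, ε * (φ (u n) - ψ (u n + (α₀ + σ n))) = d := by
      filter_upwards [Metric.tendsto_nhds.mp hvlim d hdpos] with n hn
      have h7 := hud n
      rw [abs_eq hdpos.le] at h7
      rw [Real.dist_eq] at hn
      rw [hεL] at hn
      rcases h7 with h7 | h7 <;> rcases hε1 with h8 | h8 <;>
          rw [h8] at hn <;> rw [h7] at hn ⊢ <;> rw [h8] <;>
        first
          | (exfalso; rw [abs_lt] at hn; obtain ⟨h9, h10⟩ := hn; linarith)
          | norm_num
    -- the one-point contradiction: an optimal test with ε·ψ smaller than at β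
    have hcontra : ∀ n, ε * ψ (β + σ n) < ε * ψ β → False := by
      intro n hn
      have h11 := hEn θb n
      rw [show θb + (α₀ + σ n) = β + σ n by rw [hβdef]; ring] at h11
      nlinarith [hEθb]
    set B := ε * deriv ψ β with hBdef
    rcases lt_trichotomy B 0 with hBneg | hBzero | hBpos
    · -- case ε ψ'(β) < 0 : F(θb, αₙ) > d
      have hfβ : HasDerivAt (fun y => ε * (ψ y - ψ β)) B β :=
        (((morse_diff hψ β).hasDerivAt).sub_const (ψ β)).const_mul ε
      have hβσ : Tendsto (fun n => β + σ n) atTop (𝓝[>] β) := by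
        refine tendsto_nhdsWithin_of_tendsto_nhds_of_eventually_within _ ?_
          (Eventually.of_forall fun n => ?_)
        · simpa using (tendsto_const_nhds (x := β)).add hσlim
        · exact (lt_add_iff_pos_right β).mpr (hσpos n)
      obtain ⟨n, hn⟩ :=
        (hβσ.eventually (sign_right_of_deriv_neg hfβ (by simp) hBneg)).exists
      exact hcontra n (by nlinarith [hn])
    · -- case ψ'(β) = 0
      have hψ'β : deriv ψ β = 0 := by
        rcases mul_eq_zero.mp hBzero with h | h
        · exact absurd h hεne
        · exact h
      have hb2 := hψ.2 β hψ'β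
      -- the derivative of φ also vanishes at θb
      have hψβDA : HasDerivAt ψ (deriv ψ β) (θb + α₀) := by
        rw [← hβdef]; exact (morse_diff hψ β).hasDerivAt
      have hEd : HasDerivAt (fun θ => ε * (φ θ - ψ (θ + α₀)))
          (ε * (deriv φ θb - deriv ψ β)) θb :=
        (((morse_diff hφ θb).hasDerivAt).sub (hψβDA.comp_add_const θb α₀)).const_mul ε
      have hmax : IsMaxOn (fun θ => ε * (φ θ - ψ (θ + α₀))) univ θb := by
        intro θ _
        simp only
        rw [show θb + α₀ = β from hβdef.symm, hEθb]
        exact hE0 θ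
      have hd0' : deriv (fun θ => ε * (φ θ - ψ (θ + α₀))) θb = 0 :=
        (hmax.isLocalMax univ_mem).deriv_eq_zero
      have hφ'θb : deriv φ θb = 0 := by
        have h13 := hEd.deriv
        rw [hd0', hψ'β, sub_zero] at h13
        rcases mul_eq_zero.mp h13.symm with h | h
        · exact absurd h hεne
        · exact h
      have ha2 := hφ.2 θb hφ'θb
      have hg1 : HasDerivAt (fun y => ε * deriv ψ y) (ε * deriv (deriv ψ) β) β :=
        ((morse_diffDeriv hψ β).hasDerivAt).const_mul ε
      have hg1β : ε * deriv ψ β = 0 := by rw [hψ'β]; ring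
      have hg2 : HasDerivAt (fun y => ε * deriv φ y) (ε * deriv (deriv φ) θb) θb :=
        ((morse_diffDeriv hφ θb).hasDerivAt).const_mul ε
      have hg2θb : ε * deriv φ θb = 0 := by rw [hφ'θb]; ring
      rcases lt_trichotomy (ε * deriv (deriv ψ) β) 0 with hbneg | hbz | hbpos
      · -- ε ψ''(β) < 0 : ε ψ strictly decreasing just right of β
        obtain ⟨c1, hc1, hsub⟩ := mem_nhdsGT_iff_exists_Ioo_subset.mp
          (sign_right_of_deriv_neg hg1 hg1β hbneg)
        rw [mem_Ioi] at hc1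
        have hanti : StrictAntiOn (fun y => ε * ψ y) (Icc β c1) := by
          refine strictAntiOn_of_deriv_neg (convex_Icc _ _)
            ((continuous_const.mul cψ).continuousOn) (fun y hy => ?_)
          rw [interior_Icc] at hy
          rw [deriv_const_mul ε (morse_diff hψ y)]
          exact hsub hy
        obtain ⟨n, hn⟩ := (hσlim.eventually_lt_const (sub_pos.mpr hc1)).exists
        refine hcontra n (hanti ?_ ?_ ((lt_add_iff_pos_right β).mpr (hσpos n)))
        · exact ⟨le_refl _, hc1.le⟩
        · exact ⟨by linarith [hσpos n], by linarith⟩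
      · exact absurd ((mul_eq_zero.mp hbz).resolve_left hεne) hb2
      · -- ε ψ''(β) > 0
        rcases lt_trichotomy (ε * deriv (deriv φ) θb) 0 with haneg | haz | hapos
        · -- ε φ''(θb) < 0 : strict max of ε φ at θb, strict min of ε ψ at β
          obtain ⟨c0, hc0, hsubL⟩ := mem_nhdsLT_iff_exists_Ioo_subset.mp
            (sign_left_of_deriv_neg hg2 hg2θb haneg)
          obtain ⟨c1, hc1, hsubR⟩ := mem_nhdsGT_iff_exists_Ioo_subset.mp
            (sign_right_of_deriv_neg hg2 hg2θb haneg)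
          rw [mem_Iio] at hc0
          rw [mem_Ioi] at hc1
          have hmono : StrictMonoOn (fun y => ε * φ y) (Icc c0 θb) := by
            refine strictMonoOn_of_deriv_pos (convex_Icc _ _)
              ((continuous_const.mul cφ).continuousOn) (fun y hy => ?_)
            rw [interior_Icc] at hy
            rw [deriv_const_mul ε (morse_diff hφ y)]
            exact hsubL hy
          have hantiφ : StrictAntiOn (fun y => ε * φ y) (Icc θb c1) := by
            refine strictAntiOn_of_deriv_neg (convex_Icc _ _)
              ((continuous_const.mul cφ).continuousOn) (fun y hy => ?_)
            rw [interior_Icc] at hy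
            rw [deriv_const_mul ε (morse_diff hφ y)]
            exact hsubR hy
          have hφlt : ∀ y, c0 < y → y < c1 → y ≠ θb → ε * φ y < ε * φ θb := by
            intro y h1 h2 h3
            rcases h3.lt_or_gt with h | h
            · exact hmono ⟨h1.le, h.le⟩ ⟨hc0.le, le_refl _⟩ h
            · exact hantiφ ⟨le_refl _, hc1.le⟩ ⟨h.le, h2.le⟩ h
          obtain ⟨d0, hd0'', hsubL'⟩ := mem_nhdsLT_iff_exists_Ioo_subset.mp
            (sign_left_of_deriv_pos hg1 hg1β hbpos)
          obtain ⟨d1, hd1, hsubR'⟩ := mem_nhdsGT_iff_exists_Ioo_subset.mp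
            (sign_right_of_deriv_pos hg1 hg1β hbpos)
          rw [mem_Iio] at hd0''
          rw [mem_Ioi] at hd1
          have hantiψ : StrictAntiOn (fun y => ε * ψ y) (Icc d0 β) := by
            refine strictAntiOn_of_deriv_neg (convex_Icc _ _)
              ((continuous_const.mul cψ).continuousOn) (fun y hy => ?_)
            rw [interior_Icc] at hy
            rw [deriv_const_mul ε (morse_diff hψ y)]
            exact hsubL' hy
          have hmonoψ : StrictMonoOn (fun y => ε * ψ y) (Icc β d1) := by
            refine strictMonoOn_of_deriv_pos (convex_Icc _ _)
              ((continuous_const.mul cψ).continuousOn) (fun y hy => ?_)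
            rw [interior_Icc] at hy
            rw [deriv_const_mul ε (morse_diff hψ y)]
            exact hsubR' hy
          have hψgt : ∀ y, d0 < y → y < d1 → y ≠ β → ε * ψ β < ε * ψ y := by
            intro y h1 h2 h3
            rcases h3.lt_or_gt with h | h
            · exact hantiψ ⟨h1.le, h.le⟩ ⟨hd0''.le, le_refl _⟩ h
            · exact hmonoψ ⟨le_refl _, hd1.le⟩ ⟨h.le, h2.le⟩ h
          have hu_ev : ∀ᶠ n in atTop, u n ∈ Ioo c0 c1 :=
            hulim.eventually (Ioo_mem_nhds hc0 hc1)
          have hx_ev : ∀ᶠ n in atTop, u n + (α₀ + σ n) ∈ Ioo d0 d1 :=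
            hxlim.eventually (Ioo_mem_nhds hd0'' hd1)
          obtain ⟨n, hequ, hu', hx'⟩ := (heq.and (hu_ev.and hx_ev)).exists
          by_cases huθ : u n = θb
          · have hφu : φ (u n) = φ θb := by rw [huθ]
            rw [hφu] at hequ
            have hψeq : ε * ψ (u n + (α₀ + σ n)) = ε * ψ β := by nlinarith [hEθb, hequ]
            have hXβ : u n + (α₀ + σ n) = β := by
              by_contra hne
              exact absurd hψeq (ne_of_gt (hψgt _ hx'.1 hx'.2 hne))
            rw [huθ, hβdef] at hXβ
            have : σ n = 0 := by linarith
            exact absurd this (ne_of_gt (hσpos n))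
          · have h17 : ε * φ (u n) < ε * φ θb := hφlt _ hu'.1 hu'.2 huθ
            have h18 : ε * ψ β ≤ ε * ψ (u n + (α₀ + σ n)) := by
              rcases eq_or_ne (u n + (α₀ + σ n)) β with hXe | hXe
              · rw [hXe]
              · exact (hψgt _ hx'.1 hx'.2 hXe).le
            nlinarith [hEθb, hequ]
        · exact absurd ((mul_eq_zero.mp haz).resolve_left hεne) ha2
        · -- ε φ''(θb) > 0 : ε φ strictly decreasing just left of θb; test θ = θb - σ n
          obtain ⟨c0, hc0, hsubL⟩ := mem_nhdsLT_iff_exists_Ioo_subset.mp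
            (sign_left_of_deriv_pos hg2 hg2θb hapos)
          rw [mem_Iio] at hc0
          have hanti : StrictAntiOn (fun y => ε * φ y) (Icc c0 θb) := by
            refine strictAntiOn_of_deriv_neg (convex_Icc _ _)
              ((continuous_const.mul cφ).continuousOn) (fun y hy => ?_)
            rw [interior_Icc] at hy
            rw [deriv_const_mul ε (morse_diff hφ y)]
            exact hsubL hy
          obtain ⟨n, hn⟩ := (hσlim.eventually_lt_const (sub_pos.mpr hc0)).exists
          have h15 : ε * φ θb < ε * φ (θb - σ n) := by
            refine hanti ⟨by linarith, by linarith [hσpos n]⟩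
              ⟨by linarith, le_refl _⟩ (by linarith [hσpos n])
          have h16 := hEn (θb - σ n) n
          rw [show θb - σ n + (α₀ + σ n) = β by rw [hβdef]; ring] at h16
          nlinarith [hEθb]
    · -- case ε ψ'(β) > 0 : ε ψ strictly increasing near β
      have hev : ∀ᶠ y in 𝓝 β, 0 < ε * deriv ψ y :=
        (((continuous_const.mul (morse_contDeriv hψ)).tendsto β).eventually_const_lt hBpos)
      obtain ⟨η, hη, hball⟩ := Metric.eventually_nhds_iff_ball.mp hev
      have hmono : StrictMonoOn (fun y => ε * ψ y) (Ioo (β - η) (β + η)) := by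
        refine strictMonoOn_of_deriv_pos (convex_Ioo _ _)
          ((continuous_const.mul cψ).continuousOn) (fun y hy => ?_)
        rw [interior_Ioo] at hy
        rw [deriv_const_mul ε (morse_diff hψ y)]
        exact hball y (by rw [Real.ball_eq_Ioo]; exact hy)
      have hylim : Tendsto (fun n => u n + α₀) atTop (𝓝 β) := by
        have := hulim.add (tendsto_const_nhds (x := α₀))
        simpa [hβdef] using this
      have hIoo : Ioo (β - η) (β + η) ∈ 𝓝 β := Ioo_mem_nhds (by linarith) (by linarith)
      obtain ⟨n, hequ, hx', hy'⟩ :=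
        (heq.and ((hxlim.eventually hIoo).and (hylim.eventually hIoo))).exists
      have h19 : ε * ψ (u n + (α₀ + σ n)) ≤ ε * ψ (u n + α₀) := by
        have h20 := hE0 (u n)
        nlinarith [hequ]
      have h21 := (hmono.le_iff_le hx' hy').mp h19
      have := hσpos n
      linarith

end Core
section Reflect

open Filter Topology Set

variable {φ ψ : ℝ → ℝ}

lemma morse_neg (h : IsMorse φ) : IsMorse (fun θ => φ (-θ)) := by
  constructor
  · exact h.1.comp (contDiff_id.neg)
  · intro θ h0
    have hd1 : deriv (fun θ => φ (-θ)) = fun θ => -deriv φ (-θ) := by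
      funext x; exact deriv_comp_neg φ x
    have hd2 : deriv (deriv (fun θ => φ (-θ))) θ = deriv (deriv φ) (-θ) := by
      rw [hd1]
      have h3 : deriv (fun x => -deriv φ (-x)) θ = -deriv (fun x => deriv φ (-x)) θ := by
        rw [← deriv.fun_neg]
      rw [h3, deriv_comp_neg (deriv φ) θ, neg_neg]
    rw [hd1] at h0
    simp only [neg_eq_zero] at h0
    rw [hd2]
    exact h.2 (-θ) h0

lemma periodic_neg_comp (h : Function.Periodic φ (2 * Real.pi)) :
    Function.Periodic (fun θ => φ (-θ)) (2 * Real.pi) := by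
  intro θ
  simp only [neg_add]
  rw [← sub_eq_add_neg]
  exact h.sub_eq (-θ)

lemma neg_surj : Function.Surjective (fun x : ℝ => -x) := fun y => ⟨-y, by simp⟩

lemma nG_neg (α : ℝ) :
    nG (fun θ => φ (-θ)) (fun θ => ψ (-θ)) α = nG φ ψ (-α) := by
  unfold nG
  show sSup (range _) = sSup (range _)
  congr 1
  rw [show (fun θ : ℝ => nF (fun θ => φ (-θ)) (fun θ => ψ (-θ)) θ α)
      = (fun θ : ℝ => nF φ ψ θ (-α)) ∘ (fun θ : ℝ => -θ) from funext fun θ => by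
        simp only [nF, Function.comp_apply, neg_add]]
  exact Function.Surjective.range_comp neg_surj _

lemma nD_neg : nD (fun θ => φ (-θ)) (fun θ => ψ (-θ)) = nD φ ψ := by
  unfold nD
  show sInf (range _) = sInf (range _)
  congr 1
  rw [show (fun α : ℝ => nG (fun θ => φ (-θ)) (fun θ => ψ (-θ)) α)
      = (fun α : ℝ => nG φ ψ α) ∘ (fun α : ℝ => -α) from funext fun α => by
        simp only [Function.comp_apply]; exact nG_neg α]
  exact Function.Surjective.range_comp neg_surj _

end Reflect
end OptRot

open OptRot in
theorem finitely_many_optimal_rotations (φ ψ : ℝ → ℝ)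
    (hφ : IsMorse φ) (hψ : IsMorse ψ)
    (hpφ : Function.Periodic φ (2 * Real.pi)) (hpψ : Function.Periodic ψ (2 * Real.pi)) :
    {α ∈ Set.Ico (0:ℝ) (2 * Real.pi) | nG φ ψ α = nD φ ψ}.Finite := by
  by_contra hfin
  have hinf : {α ∈ Set.Ico (0:ℝ) (2 * Real.pi) | nG φ ψ α = nD φ ψ}.Infinite := hfin
  set a : ℕ → ℝ := fun n => ((Set.Infinite.natEmbedding _ hinf) n : ℝ) with hadef
  have haS : ∀ n, a n ∈ {α ∈ Set.Ico (0:ℝ) (2 * Real.pi) | nG φ ψ α = nD φ ψ} :=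
    fun n => ((Set.Infinite.natEmbedding _ hinf) n).2
  have hainj : Function.Injective a := fun m n h =>
    (Set.Infinite.natEmbedding _ hinf).injective (Subtype.ext h)
  have haIcc : ∀ n, a n ∈ Set.Icc 0 (2*Real.pi) := fun n => Set.Ico_subset_Icc_self (haS n).1
  obtain ⟨α₀, hα₀, κ, hκ, hκlim⟩ := isCompact_Icc.tendsto_subseq haIcc
  set b : ℕ → ℝ := fun n => a (κ n) with hbdef
  have hbinj : Function.Injective b := hainj.comp hκ.injective
  have hblim : Filter.Tendsto b Filter.atTop (𝓝 α₀) := hκlim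
  have hbopt : ∀ n, nG φ ψ (b n) = nD φ ψ := fun n => (haS (κ n)).2
  have hside : {n | α₀ < b n}.Infinite ∨ {n | b n < α₀}.Infinite := by
    by_contra h
    push_neg at h
    have h0 : {n | b n = α₀}.Finite :=
      Set.Subsingleton.finite (fun m hm n hn => hbinj (hm.trans hn.symm))
    have huniv : (Set.univ : Set ℕ) ⊆ {n | α₀ < b n} ∪ {n | b n < α₀} ∪ {n | b n = α₀} := by
      intro n _
      rcases lt_trichotomy α₀ (b n) with ht | ht | ht
      · exact Or.inl (Or.inl ht)
      · exact Or.inr ht.symm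
      · exact Or.inl (Or.inr ht)
    exact Set.infinite_univ (Set.Finite.subset ((h.1.union h.2).union h0) huniv)
  rcases hside with hpos | hneg
  · obtain ⟨ν, hν, hνP⟩ := Filter.extraction_of_frequently_atTop
      (Nat.frequently_atTop_iff_infinite.mpr hpos)
    refine no_right_accumulation hφ hψ hpφ hpψ α₀ (fun n => b (ν n) - α₀)
      (fun n => sub_pos.mpr (hνP n)) ?_ ?_
    · have := (hblim.comp hν.tendsto_atTop).sub_const α₀
      simpa [Function.comp_def] using this
    · intro n
      rw [show α₀ + (b (ν n) - α₀) = b (ν n) by ring]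
      exact hbopt (ν n)
  · obtain ⟨ν, hν, hνP⟩ := Filter.extraction_of_frequently_atTop
      (Nat.frequently_atTop_iff_infinite.mpr hneg)
    refine no_right_accumulation (morse_neg hφ) (morse_neg hψ)
      (periodic_neg_comp hpφ) (periodic_neg_comp hpψ) (-α₀) (fun n => α₀ - b (ν n))
      (fun n => sub_pos.mpr (hνP n)) ?_ ?_
    · have := (tendsto_const_nhds (x := α₀)).sub (hblim.comp hν.tendsto_atTop)
      simpa [Function.comp_def] using this
    · intro n
      rw [show -α₀ + (α₀ - b (ν n)) = -(b (ν n)) by ring, nG_neg, nD_neg, neg_neg]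
      exact hbopt (ν n)
end

section
/- For φ(θ) = (1/2)sin(2θ) and ψ(θ) = sin(θ), the natural pseudo-distance is d_{S¹}(φ,ψ) = 3√3/4, attained exactly when α ∈ {0, π/2, π, 3π/2}: for these α, max_θ |φ(θ) − ψ(θ+α)| = 3√3/4, while for α ∈ {π/4, 3π/4, 5π/4, 7π/4} the maximum equals 3/2. -/
open Filter Topology Set

namespace SinTwoThetaExample

noncomputable abbrev Φex : ℝ → ℝ := fun θ => (1/2) * Real.sin (2*θ)
noncomputable abbrev Ψex : ℝ → ℝ := fun θ => Real.sin θ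

open Real

lemma nF_le_three_halves (θ α : ℝ) : nF Φex Ψex θ α ≤ 3/2 := by
  unfold nF
  have h1 := Real.abs_sin_le_one (2*θ)
  have h2 := Real.abs_sin_le_one (θ+α)
  have := abs_sub ((1/2) * Real.sin (2*θ)) (Real.sin (θ + α))
  rw [abs_mul] at this
  simp only [Φex, Ψex]
  calc |(1/2) * Real.sin (2*θ) - Real.sin (θ + α)| ≤ |(1:ℝ)/2| * |Real.sin (2*θ)| + |Real.sin (θ+α)| := this
    _ ≤ 3/2 := by rw [abs_of_nonneg (by norm_num : (0:ℝ) ≤ 1/2)]; nlinarith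

lemma bddF (α : ℝ) : BddAbove (Set.range fun θ => nF Φex Ψex θ α) :=
  ⟨3/2, by rintro y ⟨θ, rfl⟩; exact nF_le_three_halves θ α⟩

lemma le_nG (θ α : ℝ) : nF Φex Ψex θ α ≤ nG Φex Ψex α := le_ciSup (bddF α) θ

lemma nG_le {α b : ℝ} (h : ∀ θ, nF Φex Ψex θ α ≤ b) : nG Φex Ψex α ≤ b := ciSup_le h

lemma nG_nonneg (α : ℝ) : 0 ≤ nG Φex Ψex α :=
  Real.iSup_nonneg fun _ => abs_nonneg _

lemma iSup_reindex (f : ℝ → ℝ) (e : ℝ → ℝ) (he : Function.Surjective e) :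
    (⨆ θ, f (e θ)) = ⨆ θ, f θ := by
  unfold iSup
  congr 1
  exact he.range_comp f

lemma nG_neg (α : ℝ) : nG Φex Ψex (-α) = nG Φex Ψex α := by
  unfold nG
  have h : ∀ θ, nF Φex Ψex (-θ) (-α) = nF Φex Ψex θ α := by
    intro θ
    unfold nF
    simp only [Φex, Ψex]
    rw [show 2*(-θ) = -(2*θ) by ring, show -θ + -α = -(θ+α) by ring,
      Real.sin_neg, Real.sin_neg,
      show (1:ℝ)/2 * -Real.sin (2*θ) - -Real.sin (θ+α) = -((1:ℝ)/2 * Real.sin (2*θ) - Real.sin (θ+α)) by ring,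
      abs_neg]
  calc (⨆ θ, nF Φex Ψex θ (-α)) = ⨆ θ, nF Φex Ψex (-θ) (-α) :=
        (iSup_reindex (fun θ => nF Φex Ψex θ (-α)) (fun θ => -θ) (fun x => ⟨-x, by ring⟩)).symm
    _ = ⨆ θ, nF Φex Ψex θ α := by simp only [h]

lemma nG_periodic : Function.Periodic (nG Φex Ψex) (π/2) := by
  intro α
  have h : ∀ θ, nF Φex Ψex (π/2 - θ) (α + π/2) = nF Φex Ψex θ (-α) := by
    intro θ
    unfold nF
    simp only [Φex, Ψex]
    rw [show 2*(π/2 - θ) = π - 2*θ by ring, Real.sin_pi_sub,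
      show π/2 - θ + (α + π/2) = (α - θ) + π by ring, Real.sin_add_pi,
      show θ + -α = -(α - θ) by ring, Real.sin_neg]
  have : nG Φex Ψex (α + π/2) = nG Φex Ψex (-α) := by
    unfold nG
    calc (⨆ θ, nF Φex Ψex θ (α + π/2)) = ⨆ θ, nF Φex Ψex (π/2 - θ) (α + π/2) :=
          (iSup_reindex (fun θ => nF Φex Ψex θ (α + π/2)) (fun θ => π/2 - θ)
            (fun x => ⟨π/2 - x, by ring⟩)).symm
      _ = ⨆ θ, nF Φex Ψex θ (-α) := by simp only [h]
  rw [this, nG_neg]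

lemma sin_ge_aux {x : ℝ} (h1 : 5*π/12 ≤ x) (h2 : x ≤ 2*π/3) : Real.sqrt 3 / 2 ≤ Real.sin x := by
  have hx : |x - π/2| ≤ π/6 := by
    rw [abs_le]; constructor <;> linarith
  have := Real.cos_le_cos_of_nonneg_of_le_pi (abs_nonneg (x - π/2))
    (by linarith [Real.pi_pos] : π/6 ≤ π) hx
  rwa [Real.cos_pi_div_six, Real.cos_abs, Real.cos_sub_pi_div_two] at this

lemma sin_gt_aux {x : ℝ} (h1 : 5*π/12 ≤ x) (h2 : x < 2*π/3) : Real.sqrt 3 / 2 < Real.sin x := by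
  have hx : |x - π/2| < π/6 := by
    rw [abs_lt]; constructor <;> linarith [Real.pi_pos]
  have := Real.cos_lt_cos_of_nonneg_of_le_pi (abs_nonneg (x - π/2))
    (by linarith [Real.pi_pos] : π/6 ≤ π) hx
  rwa [Real.cos_pi_div_six, Real.cos_abs, Real.cos_sub_pi_div_two] at this

lemma witness_eq (β : ℝ) :
    nF Φex Ψex (-(2*π/3)) β = |Real.sqrt 3 / 4 + Real.sin (2*π/3 - β)| := by
  unfold nF
  simp only [Φex, Ψex]
  rw [show 2*(-(2*π/3)) = 2*π/3 - 2*π by ring, Real.sin_sub_two_pi,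
    show (2:ℝ)*π/3 = π - π/3 by ring, Real.sin_pi_sub, Real.sin_pi_div_three,
    show -(π - π/3) + β = -((π - π/3) - β) by ring, Real.sin_neg]
  congr 1
  ring

lemma nG_reduce (α : ℝ) :
    ∃ β, 0 ≤ β ∧ β ≤ π/4 ∧ nG Φex Ψex α = nG Φex Ψex β ∧
      (β = 0 ↔ ∃ n : ℤ, α = n * (π/2)) := by
  have hπ := Real.pi_pos
  set n : ℤ := round (α / (π/2)) with hn'
  have hr : |α / (π/2) - n| ≤ 1/2 := abs_sub_round _
  refine ⟨|α - n * (π/2)|, abs_nonneg _, ?_, ?_, ?_⟩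
  · have : |α - n * (π/2)| = |α/(π/2) - n| * (π/2) := by
      rw [show α - n * (π/2) = (α/(π/2) - n) * (π/2) by field_simp, abs_mul,
        abs_of_pos (by linarith : (0:ℝ) < π/2)]
    rw [this]
    calc |α/(π/2) - n| * (π/2) ≤ (1/2) * (π/2) := by
          apply mul_le_mul_of_nonneg_right hr (by linarith)
      _ = π/4 := by ring
  · rcases abs_choice (α - n * (π/2)) with h | h
    · rw [h]
      have := nG_periodic.sub_zsmul_eq (x := α) n
      rw [zsmul_eq_mul] at this
      rw [this]
    · rw [h, nG_neg]
      have := nG_periodic.sub_zsmul_eq (x := α) n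
      rw [zsmul_eq_mul] at this
      rw [this]
  · constructor
    · intro h
      have h0 : α - n * (π/2) = 0 := abs_eq_zero.mp h
      exact ⟨n, by linarith⟩
    · rintro ⟨m, rfl⟩
      have : (m : ℝ) * (π/2) / (π/2) = m := by field_simp
      rw [abs_eq_zero]
      have hnm : n = m := by rw [hn', this, round_intCast]
      rw [hnm]
      ring

lemma lower_of_interval {β : ℝ} (h0 : 0 ≤ β) (h1 : β ≤ π/4) :
    Real.sqrt 3 / 4 + Real.sin (2*π/3 - β) ≤ nG Φex Ψex β := by
  have hπ := Real.pi_pos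
  have hs : Real.sqrt 3 / 2 ≤ Real.sin (2*π/3 - β) :=
    sin_ge_aux (by linarith) (by linarith)
  have hnn : 0 ≤ Real.sqrt 3 / 4 + Real.sin (2*π/3 - β) := by
    have := Real.sqrt_nonneg 3
    linarith
  calc Real.sqrt 3 / 4 + Real.sin (2*π/3 - β)
      = |Real.sqrt 3 / 4 + Real.sin (2*π/3 - β)| := (abs_of_nonneg hnn).symm
    _ = nF Φex Ψex (-(2*π/3)) β := (witness_eq β).symm
    _ ≤ nG Φex Ψex β := le_nG _ β

lemma lower_all (α : ℝ) : 3 * Real.sqrt 3 / 4 ≤ nG Φex Ψex α := by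
  obtain ⟨β, h0, h1, heq, -⟩ := nG_reduce α
  rw [heq]
  have hπ := Real.pi_pos
  have hs : Real.sqrt 3 / 2 ≤ Real.sin (2*π/3 - β) :=
    sin_ge_aux (by linarith) (by linarith)
  have := lower_of_interval h0 h1
  linarith

lemma lower_strict {α : ℝ} (h : ¬ ∃ n : ℤ, α = n * (π/2)) :
    3 * Real.sqrt 3 / 4 < nG Φex Ψex α := by
  obtain ⟨β, h0, h1, heq, hiff⟩ := nG_reduce α
  rw [heq]
  have hβ : 0 < β := lt_of_le_of_ne h0 fun e => h (hiff.mp e.symm)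
  have hπ := Real.pi_pos
  have hs : Real.sqrt 3 / 2 < Real.sin (2*π/3 - β) :=
    sin_gt_aux (by linarith) (by linarith)
  have := lower_of_interval h0 h1
  linarith

lemma upper_zero (θ : ℝ) : nF Φex Ψex θ 0 ≤ 3 * Real.sqrt 3 / 4 := by
  unfold nF
  simp only [Φex, Ψex]
  rw [add_zero, Real.sin_two_mul]
  set s := Real.sin θ
  set c := Real.cos θ
  have h : s^2 + c^2 = 1 := Real.sin_sq_add_cos_sq θ
  have ht : Real.sqrt 3 ^ 2 = 3 := Real.sq_sqrt (by norm_num)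
  have ht0 : (1:ℝ) ≤ Real.sqrt 3 := by nlinarith [Real.sqrt_nonneg 3]
  have key : ((1/2) * (2*s*c) - s)^2 ≤ (3 * Real.sqrt 3 / 4)^2 := by
    nlinarith [mul_nonneg (sq_nonneg (c+1/2)) (sq_nonneg (c-3/2)), sq_nonneg (c+1/2), sq_nonneg s]
  exact abs_le_of_sq_le_sq key (by positivity)

lemma nG_zero : nG Φex Ψex 0 = 3 * Real.sqrt 3 / 4 :=
  le_antisymm (nG_le upper_zero) (lower_all 0)

lemma nG_pi_div_four : nG Φex Ψex (π/4) = 3/2 := by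
  refine le_antisymm (nG_le fun θ => nF_le_three_halves θ _) ?_
  have hw : nF Φex Ψex (5*π/4) (π/4) = 3/2 := by
    unfold nF
    simp only [Φex, Ψex]
    rw [show 2*(5*π/4) = π/2 + 2*π by ring, Real.sin_add_two_pi, Real.sin_pi_div_two,
      show 5*π/4 + π/4 = -(π/2) + 2*π by ring, Real.sin_add_two_pi, Real.sin_neg,
      Real.sin_pi_div_two]
    norm_num
  rw [← hw]
  exact le_nG _ _

lemma nG_shift (α : ℝ) (k : ℕ) : nG Φex Ψex (α + k * (π/2)) = nG Φex Ψex α := by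
  induction k with
  | zero => simp
  | succ m ih =>
    have : α + (m+1 : ℕ) * (π/2) = (α + m * (π/2)) + π/2 := by push_cast; ring
    rw [this, nG_periodic, ih]

lemma nD_eq : nD Φex Ψex = 3 * Real.sqrt 3 / 4 := by
  unfold nD
  refine le_antisymm ?_ (le_ciInf lower_all)
  have hbdd : BddBelow (Set.range (nG Φex Ψex)) :=
    ⟨0, by rintro y ⟨α, rfl⟩; exact nG_nonneg α⟩
  calc (⨅ α, nG Φex Ψex α) ≤ nG Φex Ψex 0 := ciInf_le hbdd 0
    _ = 3 * Real.sqrt 3 / 4 := nG_zero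

end SinTwoThetaExample

open SinTwoThetaExample Real in
theorem example_sin_two_theta :
    let φ : ℝ → ℝ := fun θ => (1/2) * Real.sin (2*θ)
    let ψ : ℝ → ℝ := fun θ => Real.sin θ
    nD φ ψ = 3 * Real.sqrt 3 / 4 ∧
    (∀ α ∈ ({0, Real.pi/2, Real.pi, 3*Real.pi/2} : Set ℝ), nG φ ψ α = 3 * Real.sqrt 3 / 4) ∧
    (∀ α ∈ ({Real.pi/4, 3*Real.pi/4, 5*Real.pi/4, 7*Real.pi/4} : Set ℝ), nG φ ψ α = 3/2) ∧
    (∀ α ∈ Set.Ico (0:ℝ) (2*Real.pi),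
      (nG φ ψ α = 3 * Real.sqrt 3 / 4 ↔ α ∈ ({0, Real.pi/2, Real.pi, 3*Real.pi/2} : Set ℝ))) := by
  intro φ ψ
  have hπ := Real.pi_pos
  have h0 : nG Φex Ψex 0 = 3 * Real.sqrt 3 / 4 := nG_zero
  have h1 : nG Φex Ψex (π/2) = 3 * Real.sqrt 3 / 4 := by
    rw [show π/2 = 0 + (1:ℕ) * (π/2) by push_cast; ring, nG_shift, nG_zero]
  have h2 : nG Φex Ψex π = 3 * Real.sqrt 3 / 4 := by
    rw [show π = 0 + (2:ℕ) * (π/2) by push_cast; ring, nG_shift, nG_zero]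
  have h3 : nG Φex Ψex (3*π/2) = 3 * Real.sqrt 3 / 4 := by
    rw [show 3*π/2 = 0 + (3:ℕ) * (π/2) by push_cast; ring, nG_shift, nG_zero]
  have q0 : nG Φex Ψex (π/4) = 3/2 := nG_pi_div_four
  have q1 : nG Φex Ψex (3*π/4) = 3/2 := by
    rw [show 3*π/4 = π/4 + (1:ℕ) * (π/2) by push_cast; ring, nG_shift, nG_pi_div_four]
  have q2 : nG Φex Ψex (5*π/4) = 3/2 := by
    rw [show 5*π/4 = π/4 + (2:ℕ) * (π/2) by push_cast; ring, nG_shift, nG_pi_div_four]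
  have q3 : nG Φex Ψex (7*π/4) = 3/2 := by
    rw [show 7*π/4 = π/4 + (3:ℕ) * (π/2) by push_cast; ring, nG_shift, nG_pi_div_four]
  refine ⟨nD_eq, ?_, ?_, ?_⟩
  · intro α hα
    simp only [Set.mem_insert_iff, Set.mem_singleton_iff] at hα
    rcases hα with rfl | rfl | rfl | rfl
    · exact h0
    · exact h1
    · exact h2
    · exact h3
  · intro α hα
    simp only [Set.mem_insert_iff, Set.mem_singleton_iff] at hα
    rcases hα with rfl | rfl | rfl | rfl
    · exact q0
    · exact q1
    · exact q2
    · exact q3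
  · intro α hα
    constructor
    · intro hval
      by_contra hmem
      have hne : ¬ ∃ n : ℤ, α = n * (π/2) := by
        rintro ⟨n, rfl⟩
        obtain ⟨hge, hlt⟩ := hα
        have hn0 : (0:ℤ) ≤ n := by
          by_contra hneg
          push_neg at hneg
          have hle : n ≤ -1 := by omega
          have : (n:ℝ) ≤ -1 := by exact_mod_cast hle
          nlinarith
        have hn4 : n < 4 := by
          by_contra hge4
          push_neg at hge4
          have : (4:ℝ) ≤ (n:ℝ) := by exact_mod_cast hge4
          nlinarith
        apply hmem
        simp only [Set.mem_insert_iff, Set.mem_singleton_iff]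
        interval_cases n
        · left; push_cast; ring
        · right; left; push_cast; ring
        · right; right; left; push_cast; ring
        · right; right; right; push_cast; ring
      have := lower_strict hne
      rw [hval] at this
      exact lt_irrefl _ this
    · intro hmem
      simp only [Set.mem_insert_iff, Set.mem_singleton_iff] at hmem
      rcases hmem with rfl | rfl | rfl | rfl
      · exact h0
      · exact h1
      · exact h2
      · exact h3
end
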